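/- arXiv:1110.6830 — 3 statements merged into one kernel-verified Lean document; each statement's English description precedes it below -/
import Mathlib

section
/- For a doubly warped product Finsler metric F² = f₂²F₁² + f₁²F₂², the spray coefficients split as 𝐆^i(x,u,y,v) = G^i(x,y) + (1/(4f₂²)) g^{ih}( (∂f₂²/∂u^α)(∂F₁²/∂y^h) v^α − (∂f₁²/∂x^h) F₂² ), where G^i are the spray coefficients of F₁ and g^{ih} is the inverse fundamental tensor of F₁. -/
/-- Partial derivative in the fiber variable. -/
noncomputable def pd {ι : Type*} [Fintype ι] [DecidableEq ι]
    (i : ι) (f : (ι → ℝ) → ℝ) (y : ι → ℝ) : ℝ :=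
  fderiv ℝ f y (Pi.single i 1)

/-- Partial derivative in the base variable of a two-argument function. -/
noncomputable def pdb {ι : Type*} [Fintype ι] [DecidableEq ι] {β : Type*}
    (i : ι) (f : (ι → ℝ) → β → ℝ) (x : ι → ℝ) (y : β) : ℝ :=
  fderiv ℝ (fun x' => f x' y) x (Pi.single i 1)

section Aux

variable {n : ℕ} {Fq : (Fin n → ℝ) → (Fin n → ℝ) → ℝ}

private lemma isOpen_aux : IsOpen {p : (Fin n → ℝ) × (Fin n → ℝ) | p.2 ≠ 0} :=
  isOpen_ne.preimage continuous_snd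

private lemma contDiffAt_aux (hsm : ContDiffOn ℝ (⊤ : ℕ∞) (fun p : (Fin n → ℝ) × (Fin n → ℝ) => Fq p.1 p.2)
    {p : (Fin n → ℝ) × (Fin n → ℝ) | p.2 ≠ 0}) {x y : Fin n → ℝ} (hy : y ≠ 0) :
    ContDiffAt ℝ (⊤ : ℕ∞) (fun p : (Fin n → ℝ) × (Fin n → ℝ) => Fq p.1 p.2) (x, y) :=
  hsm.contDiffAt (isOpen_aux.mem_nhds hy)

private lemma hasFDerivAt_snd_slice (hsm : ContDiffOn ℝ (⊤ : ℕ∞) (fun p : (Fin n → ℝ) × (Fin n → ℝ) => Fq p.1 p.2) {p : (Fin n → ℝ) × (Fin n → ℝ) | p.2 ≠ 0}) {x y : Fin n → ℝ} (hy : y ≠ 0) :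
    HasFDerivAt (Fq x)
      ((fderiv ℝ (fun p : (Fin n → ℝ) × (Fin n → ℝ) => Fq p.1 p.2) (x, y)).comp
        (ContinuousLinearMap.inr ℝ _ _)) y :=
  (((contDiffAt_aux hsm hy).differentiableAt (by simp)).hasFDerivAt).comp y
    (hasFDerivAt_prodMk_right x y)

private lemma hasFDerivAt_fst_slice (hsm : ContDiffOn ℝ (⊤ : ℕ∞) (fun p : (Fin n → ℝ) × (Fin n → ℝ) => Fq p.1 p.2) {p : (Fin n → ℝ) × (Fin n → ℝ) | p.2 ≠ 0}) {x y : Fin n → ℝ} (hy : y ≠ 0) :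
    HasFDerivAt (fun x' => Fq x' y)
      ((fderiv ℝ (fun p : (Fin n → ℝ) × (Fin n → ℝ) => Fq p.1 p.2) (x, y)).comp
        (ContinuousLinearMap.inl ℝ _ _)) x :=
  by have := (((contDiffAt_aux (x := x) hsm hy).differentiableAt (by simp)).hasFDerivAt).comp x
      (hasFDerivAt_prodMk_left (𝕜 := ℝ) x y); exact this

private lemma pd_slice (hsm : ContDiffOn ℝ (⊤ : ℕ∞) (fun p : (Fin n → ℝ) × (Fin n → ℝ) => Fq p.1 p.2) {p : (Fin n → ℝ) × (Fin n → ℝ) | p.2 ≠ 0}) {x y : Fin n → ℝ} (hy : y ≠ 0) (h : Fin n) :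
    pd h (Fq x) y
      = fderiv ℝ (fun p : (Fin n → ℝ) × (Fin n → ℝ) => Fq p.1 p.2) (x, y)
          (0, Pi.single h 1) := by
  rw [pd, (hasFDerivAt_snd_slice hsm hy).fderiv]
  simp

private lemma differentiableAt_pd_slice (hsm : ContDiffOn ℝ (⊤ : ℕ∞) (fun p : (Fin n → ℝ) × (Fin n → ℝ) => Fq p.1 p.2) {p : (Fin n → ℝ) × (Fin n → ℝ) | p.2 ≠ 0}) {y : Fin n → ℝ} (hy : y ≠ 0) (h : Fin n)
    (x : Fin n → ℝ) : DifferentiableAt ℝ (fun x' => pd h (Fq x') y) x := by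
  have hkey : (fun x' => pd h (Fq x') y)
      = fun x' => ContinuousLinearMap.apply ℝ ℝ
          ((0, Pi.single h 1) : (Fin n → ℝ) × (Fin n → ℝ))
          (fderiv ℝ (fun p : (Fin n → ℝ) × (Fin n → ℝ) => Fq p.1 p.2) (x', y)) :=
    funext fun x' => pd_slice hsm hy h
  rw [hkey]
  have h1 : ContDiffAt ℝ (⊤ : ℕ∞)
      (fun x' : Fin n → ℝ =>
        fderiv ℝ (fun p : (Fin n → ℝ) × (Fin n → ℝ) => Fq p.1 p.2) (x', y)) x :=
    ((contDiffAt_aux hsm hy).fderiv_right (m := (⊤ : ℕ∞)) (by simp)).comp x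
      (contDiffAt_id.prodMk contDiffAt_const)
  exact ((ContinuousLinearMap.apply ℝ ℝ _).differentiable.differentiableAt).comp x
    (h1.differentiableAt (by simp))

end Aux



/-- For the doubly warped product metric `F² = f₂²F₁² + f₁²F₂²`,
the spray coefficients split as
`𝐆^i = G^i + (1/(4f₂²)) g^{ih}((∂f₂²/∂u^α)(∂F₁²/∂y^h) v^α − (∂f₁²/∂x^h)F₂²)`. -/
theorem stmt7 {n₁ n₂ : ℕ}
    (F₁sq : (Fin n₁ → ℝ) → (Fin n₁ → ℝ) → ℝ)
    (F₂sq : (Fin n₂ → ℝ) → (Fin n₂ → ℝ) → ℝ)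
    (f₁sq : (Fin n₁ → ℝ) → ℝ) (f₂sq : (Fin n₂ → ℝ) → ℝ)
    (hf₁ : ∀ x, 0 < f₁sq x) (hf₂ : ∀ u, 0 < f₂sq u)
    (hf₁sm : ContDiff ℝ (⊤ : ℕ∞) f₁sq) (hf₂sm : ContDiff ℝ (⊤ : ℕ∞) f₂sq)
    (h₁sm : ContDiffOn ℝ (⊤ : ℕ∞) (fun p : (Fin n₁ → ℝ) × (Fin n₁ → ℝ) => F₁sq p.1 p.2)
      {p : (Fin n₁ → ℝ) × (Fin n₁ → ℝ) | p.2 ≠ 0})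
    (h₂sm : ContDiffOn ℝ (⊤ : ℕ∞) (fun p : (Fin n₂ → ℝ) × (Fin n₂ → ℝ) => F₂sq p.1 p.2)
      {p : (Fin n₂ → ℝ) × (Fin n₂ → ℝ) | p.2 ≠ 0})
    (hhom₁ : ∀ c : ℝ, 0 < c → ∀ x y, F₁sq x (c • y) = c ^ 2 * F₁sq x y)
    (hhom₂ : ∀ c : ℝ, 0 < c → ∀ u v, F₂sq u (c • v) = c ^ 2 * F₂sq u v)
    -- fundamental tensor of F₁ and its inverse
    (g₁ ginv₁ : Fin n₁ → Fin n₁ → (Fin n₁ → ℝ) → (Fin n₁ → ℝ) → ℝ)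
    (hg₁ : ∀ i j x y, g₁ i j x y = (1 / 2) * pd i (pd j (F₁sq x)) y)
    (hginv₁ : ∀ x (y : Fin n₁ → ℝ), y ≠ 0 → ∀ i k,
      (∑ h, ginv₁ i h x y * g₁ h k x y) = if i = k then (1 : ℝ) else 0)
    -- spray coefficients of F₁
    (G₁ : Fin n₁ → (Fin n₁ → ℝ) → (Fin n₁ → ℝ) → ℝ)
    (hG₁ : ∀ i x y, G₁ i x y = (1 / 4) * ∑ h, ginv₁ i h x y *
      ((∑ j, pdb j (fun x' y' => pd h (F₁sq x') y') x y * y j) - pdb h F₁sq x y))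
    -- the doubly warped metric in combined coordinates
    (Fsq : ((Fin n₁ ⊕ Fin n₂) → ℝ) → ((Fin n₁ ⊕ Fin n₂) → ℝ) → ℝ)
    (hFsq : ∀ b w, Fsq b w = f₂sq (b ∘ Sum.inr) * F₁sq (b ∘ Sum.inl) (w ∘ Sum.inl)
        + f₁sq (b ∘ Sum.inl) * F₂sq (b ∘ Sum.inr) (w ∘ Sum.inr))
    -- inverse fundamental tensor of F (block diagonal)
    (Ginv : (Fin n₁ ⊕ Fin n₂) → (Fin n₁ ⊕ Fin n₂) →
      ((Fin n₁ ⊕ Fin n₂) → ℝ) → ((Fin n₁ ⊕ Fin n₂) → ℝ) → ℝ)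
    (g₂ ginv₂ : Fin n₂ → Fin n₂ → (Fin n₂ → ℝ) → (Fin n₂ → ℝ) → ℝ)
    (hg₂ : ∀ α β u v, g₂ α β u v = (1 / 2) * pd α (pd β (F₂sq u)) v)
    (hginv₂ : ∀ u (v : Fin n₂ → ℝ), v ≠ 0 → ∀ α γ,
      (∑ β, ginv₂ α β u v * g₂ β γ u v) = if α = γ then (1 : ℝ) else 0)
    (hGinv₁ : ∀ (i h : Fin n₁) b w,
      Ginv (Sum.inl i) (Sum.inl h) b w
        = (f₂sq (b ∘ Sum.inr))⁻¹ * ginv₁ i h (b ∘ Sum.inl) (w ∘ Sum.inl))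
    (hGinv₂ : ∀ (α γ : Fin n₂) b w,
      Ginv (Sum.inr α) (Sum.inr γ) b w
        = (f₁sq (b ∘ Sum.inl))⁻¹ * ginv₂ α γ (b ∘ Sum.inr) (w ∘ Sum.inr))
    (hGinv₀ : ∀ (i : Fin n₁) (β : Fin n₂) b w,
      Ginv (Sum.inl i) (Sum.inr β) b w = 0 ∧ Ginv (Sum.inr β) (Sum.inl i) b w = 0)
    -- spray coefficients of the doubly warped metric
    (BoldG : (Fin n₁ ⊕ Fin n₂) → ((Fin n₁ ⊕ Fin n₂) → ℝ) → ((Fin n₁ ⊕ Fin n₂) → ℝ) → ℝ)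
    (hBoldG : ∀ a b w, BoldG a b w = (1 / 4) * ∑ c, Ginv a c b w *
      ((∑ e, pdb e (fun b' w' => pd c (Fsq b') w') b w * w e) - pdb c Fsq b w)) :
    ∀ (b w : (Fin n₁ ⊕ Fin n₂) → ℝ), w ∘ Sum.inl ≠ 0 → w ∘ Sum.inr ≠ 0 →
      ∀ i : Fin n₁,
      BoldG (Sum.inl i) b w
        = G₁ i (b ∘ Sum.inl) (w ∘ Sum.inl)
          + (1 / (4 * f₂sq (b ∘ Sum.inr))) *
            ∑ h, ginv₁ i h (b ∘ Sum.inl) (w ∘ Sum.inl) *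
              ((∑ α, pd α f₂sq (b ∘ Sum.inr) * pd h (F₁sq (b ∘ Sum.inl)) (w ∘ Sum.inl)
                  * w (Sum.inr α))
                - pd h f₁sq (b ∘ Sum.inl) * F₂sq (b ∘ Sum.inr) (w ∘ Sum.inr)) := by
  intro b w hy hv i
  classical
  set x : Fin n₁ → ℝ := b ∘ Sum.inl with hxdef
  set u : Fin n₂ → ℝ := b ∘ Sum.inr with hudef
  set y : Fin n₁ → ℝ := w ∘ Sum.inl with hydef
  set v : Fin n₂ → ℝ := w ∘ Sum.inr with hvdef
  -- restriction maps
  set P₁ : ((Fin n₁ ⊕ Fin n₂) → ℝ) →L[ℝ] (Fin n₁ → ℝ) :=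
    ContinuousLinearMap.pi (fun j => ContinuousLinearMap.proj (Sum.inl j)) with hP₁def
  set P₂ : ((Fin n₁ ⊕ Fin n₂) → ℝ) →L[ℝ] (Fin n₂ → ℝ) :=
    ContinuousLinearMap.pi (fun j => ContinuousLinearMap.proj (Sum.inr j)) with hP₂def
  have hP₁l : ∀ h : Fin n₁, P₁ (Pi.single (Sum.inl h) 1) = Pi.single h 1 := by
    intro h; ext j
    simp [hP₁def, Pi.single_apply, Sum.inl.injEq, eq_comm]
  have hP₁r : ∀ α : Fin n₂, P₁ (Pi.single (Sum.inr α) 1) = 0 := by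
    intro α; ext j; simp [hP₁def, Pi.single_apply]
  have hP₂l : ∀ h : Fin n₁, P₂ (Pi.single (Sum.inl h) 1) = 0 := by
    intro h; ext j; simp [hP₂def, Pi.single_apply]
  have hP₂r : ∀ α : Fin n₂, P₂ (Pi.single (Sum.inr α) 1) = Pi.single α 1 := by
    intro α; ext j
    simp [hP₂def, Pi.single_apply, Sum.inr.injEq, eq_comm]
  -- (A)
  have hA : ∀ (b' : (Fin n₁ ⊕ Fin n₂) → ℝ) (h : Fin n₁),
      pd (Sum.inl h) (Fsq b') w = f₂sq (b' ∘ Sum.inr) * pd h (F₁sq (b' ∘ Sum.inl)) y := by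
    intro b' h
    have hFeq : Fsq b' = fun w' => f₂sq (b' ∘ Sum.inr) * F₁sq (b' ∘ Sum.inl) (P₁ w')
        + f₁sq (b' ∘ Sum.inl) * F₂sq (b' ∘ Sum.inr) (P₂ w') :=
      funext fun w' => hFsq b' w'
    have h1 : HasFDerivAt (fun w' => F₁sq (b' ∘ Sum.inl) (P₁ w'))
        (((fderiv ℝ (fun p : (Fin n₁ → ℝ) × (Fin n₁ → ℝ) => F₁sq p.1 p.2)
          (b' ∘ Sum.inl, y)).comp (ContinuousLinearMap.inr ℝ _ _)).comp P₁) w :=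
      (hasFDerivAt_snd_slice h₁sm hy).comp w P₁.hasFDerivAt
    have h2 : HasFDerivAt (fun w' => F₂sq (b' ∘ Sum.inr) (P₂ w'))
        (((fderiv ℝ (fun p : (Fin n₂ → ℝ) × (Fin n₂ → ℝ) => F₂sq p.1 p.2)
          (b' ∘ Sum.inr, v)).comp (ContinuousLinearMap.inr ℝ _ _)).comp P₂) w :=
      (hasFDerivAt_snd_slice h₂sm hv).comp w P₂.hasFDerivAt
    have hF : HasFDerivAt (fun w' => f₂sq (b' ∘ Sum.inr) * F₁sq (b' ∘ Sum.inl) (P₁ w')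
        + f₁sq (b' ∘ Sum.inl) * F₂sq (b' ∘ Sum.inr) (P₂ w')) _ w :=
      (h1.const_mul (f₂sq (b' ∘ Sum.inr))).add (h2.const_mul (f₁sq (b' ∘ Sum.inl)))
    rw [pd, hFeq, hF.fderiv, pd_slice h₁sm hy h]
    simp [hP₁l, hP₂l, Prod.mk_zero_zero]
  -- derivative of Φ_h
  have hΦ : ∀ h : Fin n₁, HasFDerivAt (fun b' => f₂sq (P₂ b') * pd h (F₁sq (P₁ b')) y)
      (f₂sq u • ((fderiv ℝ (fun x' => pd h (F₁sq x') y) x).comp P₁)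
        + (pd h (F₁sq x) y) • ((fderiv ℝ f₂sq u).comp P₂)) b := by
    intro h
    have h1 : HasFDerivAt (fun b' => pd h (F₁sq (P₁ b')) y)
        ((fderiv ℝ (fun x' => pd h (F₁sq x') y) x).comp P₁) b :=
      by have := ((differentiableAt_pd_slice h₁sm hy h x).hasFDerivAt).comp b P₁.hasFDerivAt; exact this
    have h2 : HasFDerivAt (fun b' => f₂sq (P₂ b')) ((fderiv ℝ f₂sq u).comp P₂) b :=
      ((hf₂sm.differentiable (by simp) u).hasFDerivAt).comp b P₂.hasFDerivAt
    exact h2.mul h1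
  have hΦfun : ∀ h : Fin n₁, (fun b' => pd (Sum.inl h) (Fsq b') w)
      = fun b' => f₂sq (P₂ b') * pd h (F₁sq (P₁ b')) y :=
    fun h => funext fun b' => hA b' h
  -- (B)
  have hB : ∀ (j h : Fin n₁),
      pdb (Sum.inl j) (fun b' w' => pd (Sum.inl h) (Fsq b') w') b w
        = f₂sq u * pdb j (fun x' y' => pd h (F₁sq x') y') x y := by
    intro j h
    rw [pdb, hΦfun h, (hΦ h).fderiv, pdb]
    simp [hP₁l, hP₂l]
  -- (C)
  have hC : ∀ (α : Fin n₂) (h : Fin n₁),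
      pdb (Sum.inr α) (fun b' w' => pd (Sum.inl h) (Fsq b') w') b w
        = pd α f₂sq u * pd h (F₁sq x) y := by
    intro α h
    rw [pdb, hΦfun h, (hΦ h).fderiv]
    simp [hP₁r, hP₂r, pd]
    exact mul_comm _ _
  -- (D)
  have hD : ∀ h : Fin n₁, pdb (Sum.inl h) Fsq b w
      = f₂sq u * pdb h F₁sq x y + pd h f₁sq x * F₂sq u v := by
    intro h
    have hFeq : (fun b' => Fsq b' w)
        = fun b' => f₂sq (P₂ b') * F₁sq (P₁ b') y + f₁sq (P₁ b') * F₂sq (P₂ b') v :=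
      funext fun b' => hFsq b' w
    have h1 : HasFDerivAt (fun b' => F₁sq (P₁ b') y)
        (((fderiv ℝ (fun p : (Fin n₁ → ℝ) × (Fin n₁ → ℝ) => F₁sq p.1 p.2)
          (x, y)).comp (ContinuousLinearMap.inl ℝ _ _)).comp P₁) b :=
      (hasFDerivAt_fst_slice h₁sm hy).comp b P₁.hasFDerivAt
    have h2 : HasFDerivAt (fun b' => f₂sq (P₂ b')) ((fderiv ℝ f₂sq u).comp P₂) b :=
      ((hf₂sm.differentiable (by simp) u).hasFDerivAt).comp b P₂.hasFDerivAt
    have h3 : HasFDerivAt (fun b' => F₂sq (P₂ b') v)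
        (((fderiv ℝ (fun p : (Fin n₂ → ℝ) × (Fin n₂ → ℝ) => F₂sq p.1 p.2)
          (u, v)).comp (ContinuousLinearMap.inl ℝ _ _)).comp P₂) b :=
      (hasFDerivAt_fst_slice h₂sm hv).comp b P₂.hasFDerivAt
    have h4 : HasFDerivAt (fun b' => f₁sq (P₁ b')) ((fderiv ℝ f₁sq x).comp P₁) b :=
      ((hf₁sm.differentiable (by simp) x).hasFDerivAt).comp b P₁.hasFDerivAt
    have hF : HasFDerivAt
        (fun b' => f₂sq (P₂ b') * F₁sq (P₁ b') y + f₁sq (P₁ b') * F₂sq (P₂ b') v) _ b :=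
      (h2.mul h1).add (h4.mul h3)
    have heq1 : fderiv ℝ (fun x' => F₁sq x' y) x
        = ((fderiv ℝ (fun p : (Fin n₁ → ℝ) × (Fin n₁ → ℝ) => F₁sq p.1 p.2)
          (x, y)).comp (ContinuousLinearMap.inl ℝ _ _)) :=
      (hasFDerivAt_fst_slice h₁sm hy).fderiv
    have hub : f₂sq (P₂ b) = f₂sq u := rfl
    have hvb : F₂sq (P₂ b) v = F₂sq u v := rfl
    rw [pdb, hFeq, hF.fderiv]
    simp only [ContinuousLinearMap.add_apply, ContinuousLinearMap.smul_apply,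
      ContinuousLinearMap.comp_apply, hP₁l, hP₂l, map_zero, smul_eq_mul, mul_zero,
      add_zero, zero_add, hub, hvb, pdb, pd, heq1,
      ContinuousLinearMap.inl_apply]
    ring
  -- assemble
  have hf₂ne : f₂sq u ≠ 0 := (hf₂ u).ne'
  rw [hBoldG, Fintype.sum_sum_type]
  have hzero : ∑ γ : Fin n₂, Ginv (Sum.inl i) (Sum.inr γ) b w *
      ((∑ e, pdb e (fun b' w' => pd (Sum.inr γ) (Fsq b') w') b w * w e)
        - pdb (Sum.inr γ) Fsq b w) = 0 :=
    Finset.sum_eq_zero fun γ _ => by rw [(hGinv₀ i γ b w).1, zero_mul]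
  rw [hzero, add_zero, hG₁]
  rw [Finset.mul_sum, Finset.mul_sum, Finset.mul_sum, ← Finset.sum_add_distrib]
  refine Finset.sum_congr rfl fun h _ => ?_
  have hwy : ∀ j, w (Sum.inl j) = y j := fun j => rfl
  have hinner : (∑ e, pdb e (fun b' w' => pd (Sum.inl h) (Fsq b') w') b w * w e)
      = f₂sq u * (∑ j, pdb j (fun x' y' => pd h (F₁sq x') y') x y * y j)
        + ∑ α, pd α f₂sq u * pd h (F₁sq x) y * w (Sum.inr α) := by
    rw [Fintype.sum_sum_type, Finset.mul_sum]
    congr 1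
    · refine Finset.sum_congr rfl fun j _ => ?_
      rw [hB j h, hwy j]; ring
    · exact Finset.sum_congr rfl fun α _ => by rw [hC α h]
  rw [hGinv₁ i h b w, hinner, hD h]
  simp only [← hxdef, ← hudef, ← hydef, ← hvdef]
  field_simp
  have hcomm : ∑ α, pd h (F₁sq x) y * pd α f₂sq u * w (Sum.inr α)
      = ∑ α, pd α f₂sq u * pd h (F₁sq x) y * w (Sum.inr α) :=
    Finset.sum_congr rfl fun α _ => by ring
  rw [hcomm]
  ring
end

section
/- For a doubly warped product Finsler manifold, 𝐆^k_{αβ} := ∂𝐆^k_α/∂v^β = −(1/(2f₂²)) g_{αβ} g^{kh} ∂f₁²/∂x^h, where g_{αβ} is the fundamental tensor of F₂ and g^{kh} the inverse fundamental tensor of F₁. In particular 𝐆^k_{αβ} = 𝐆^k_{βα}. -/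
/-- For a doubly warped product Finsler manifold,
`𝐆^k_{αβ} = ∂²𝐆^k/∂v^α∂v^β = −(1/(2f₂²)) g_{αβ} g^{kh} ∂f₁²/∂x^h`, and in
particular `𝐆^k_{αβ} = 𝐆^k_{βα}`. -/
theorem stmt10 {n₁ n₂ : ℕ}
    (F₁sq : (Fin n₁ → ℝ) → (Fin n₁ → ℝ) → ℝ)
    (F₂sq : (Fin n₂ → ℝ) → (Fin n₂ → ℝ) → ℝ)
    (f₁sq : (Fin n₁ → ℝ) → ℝ) (f₂sq : (Fin n₂ → ℝ) → ℝ)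
    (hf₂ : ∀ u, 0 < f₂sq u)
    (h₁sm : ∀ x, ContDiffOn ℝ (⊤ : ℕ∞) (F₁sq x) {y : Fin n₁ → ℝ | y ≠ 0})
    (h₂sm : ∀ u, ContDiffOn ℝ (⊤ : ℕ∞) (F₂sq u) {v : Fin n₂ → ℝ | v ≠ 0})
    (hhom₂ : ∀ c : ℝ, 0 < c → ∀ u v, F₂sq u (c • v) = c ^ 2 * F₂sq u v)
    -- fundamental tensor of F₂
    (g₂ : Fin n₂ → Fin n₂ → (Fin n₂ → ℝ) → (Fin n₂ → ℝ) → ℝ)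
    (hg₂ : ∀ α β u v, g₂ α β u v = (1 / 2) * pd α (pd β (F₂sq u)) v)
    -- inverse fundamental tensor of F₁
    (g₁ ginv₁ : Fin n₁ → Fin n₁ → (Fin n₁ → ℝ) → (Fin n₁ → ℝ) → ℝ)
    (hg₁ : ∀ i j x y, g₁ i j x y = (1 / 2) * pd i (pd j (F₁sq x)) y)
    (hginv₁ : ∀ x (y : Fin n₁ → ℝ), y ≠ 0 → ∀ i k,
      (∑ h, ginv₁ i h x y * g₁ h k x y) = if i = k then (1 : ℝ) else 0)
    (G₁ : Fin n₁ → (Fin n₁ → ℝ) → (Fin n₁ → ℝ) → ℝ)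
    (BoldG : Fin n₁ → (Fin n₁ → ℝ) → (Fin n₂ → ℝ) → (Fin n₁ → ℝ) → (Fin n₂ → ℝ) → ℝ)
    (hBoldG : ∀ k x u y v, BoldG k x u y v = G₁ k x y
      + (1 / (4 * f₂sq u)) * ∑ h, ginv₁ k h x y *
          ((∑ α, pd α f₂sq u * pd h (F₁sq x) y * v α) - pd h f₁sq x * F₂sq u v)) :
    ∀ (x : Fin n₁ → ℝ) (u : Fin n₂ → ℝ) (y : Fin n₁ → ℝ) (v : Fin n₂ → ℝ),
      y ≠ 0 → v ≠ 0 → ∀ (k : Fin n₁) (α β : Fin n₂),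
      pd β (fun v' => pd α (BoldG k x u y) v') v
        = -(1 / (2 * f₂sq u)) * g₂ α β u v * ∑ h, ginv₁ k h x y * pd h f₁sq x ∧
      pd β (fun v' => pd α (BoldG k x u y) v') v
        = pd α (fun v' => pd β (BoldG k x u y) v') v := by
  intro x u y v hy hv k α β
  classical
  set f : (Fin n₂ → ℝ) → ℝ := F₂sq u with hfdef
  have hOopen : IsOpen {v' : Fin n₂ → ℝ | v' ≠ 0} := isOpen_ne
  have hsm : ∀ w : Fin n₂ → ℝ, w ≠ 0 → ContDiffAt ℝ (⊤ : ℕ∞) f w :=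
    fun w hw => (h₂sm u).contDiffAt (hOopen.mem_nhds hw)
  have hdf : ∀ w : Fin n₂ → ℝ, w ≠ 0 → DifferentiableAt ℝ f w :=
    fun w hw => (hsm w hw).differentiableAt (by simp)
  set S : ℝ := ∑ h, ginv₁ k h x y * pd h f₁sq x with hSdef
  set D : ℝ := -((1 / (4 * f₂sq u)) * S) with hDdef
  set E : Fin n₂ → ℝ := fun γ =>
    (1 / (4 * f₂sq u)) * ∑ h, ginv₁ k h x y * (pd γ f₂sq u * pd h (F₁sq x) y) with hEdef
  -- rewrite BoldG as a constant + linear + D * f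
  have hfun : BoldG k x u y = fun v' => (G₁ k x y + ∑ γ, E γ * v' γ) + D * f v' := by
    funext v'
    rw [hBoldG]
    have h1 : ∀ h : Fin n₁, ginv₁ k h x y *
        ((∑ γ, pd γ f₂sq u * pd h (F₁sq x) y * v' γ) - pd h f₁sq x * F₂sq u v')
        = (∑ γ, ginv₁ k h x y * (pd γ f₂sq u * pd h (F₁sq x) y) * v' γ)
          - ginv₁ k h x y * pd h f₁sq x * f v' := by
      intro h
      rw [mul_sub, Finset.mul_sum]
      congr 1
      · exact Finset.sum_congr rfl fun γ _ => by ring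
      · ring
    rw [Finset.sum_congr rfl fun h _ => h1 h, Finset.sum_sub_distrib, Finset.sum_comm,
      mul_sub]
    have e1 : (1 / (4 * f₂sq u)) *
        ∑ γ, ∑ h, ginv₁ k h x y * (pd γ f₂sq u * pd h (F₁sq x) y) * v' γ
        = ∑ γ, E γ * v' γ := by
      rw [Finset.mul_sum]
      refine Finset.sum_congr rfl fun γ _ => ?_
      rw [hEdef, ← Finset.sum_mul]
      ring
    have e2 : (1 / (4 * f₂sq u)) * ∑ h, ginv₁ k h x y * pd h f₁sq x * f v'
        = -(D * f v') := by
      rw [hDdef, hSdef, ← Finset.sum_mul]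
      ring
    rw [e1, e2]
    ring
  -- first derivative on the open set
  have hL : ∀ w : Fin n₂ → ℝ, HasFDerivAt (fun v' : Fin n₂ → ℝ => ∑ γ, E γ * v' γ)
      (∑ γ, E γ • (ContinuousLinearMap.proj γ : (Fin n₂ → ℝ) →L[ℝ] ℝ)) w := by
    intro w
    refine HasFDerivAt.fun_sum fun γ _ => ?_
    exact ((ContinuousLinearMap.proj γ : (Fin n₂ → ℝ) →L[ℝ] ℝ).hasFDerivAt (x := w)).const_mul
      (E γ)
  have hpd1 : ∀ (γ : Fin n₂) (w : Fin n₂ → ℝ), w ≠ 0 →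
      pd γ (BoldG k x u y) w = E γ + D * pd γ f w := by
    intro γ w hw
    have hF : HasFDerivAt (BoldG k x u y)
        (((0 : (Fin n₂ → ℝ) →L[ℝ] ℝ) + ∑ γ, E γ • (ContinuousLinearMap.proj γ :
          (Fin n₂ → ℝ) →L[ℝ] ℝ)) + D • fderiv ℝ f w) w := by
      rw [hfun]
      exact ((hasFDerivAt_const (G₁ k x y) w).add (hL w)).add
        ((hdf w hw).hasFDerivAt.const_mul D)
    simp only [pd, hF.fderiv]
    simp [ContinuousLinearMap.sum_apply, Pi.single_apply, Finset.sum_ite_eq', mul_ite]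
  have hmem : {v' : Fin n₂ → ℝ | v' ≠ 0} ∈ nhds v := hOopen.mem_nhds hv
  have hev : ∀ γ : Fin n₂, (fun v' => pd γ (BoldG k x u y) v')
      =ᶠ[nhds v] fun v' => E γ + D * pd γ f v' :=
    fun γ => Filter.eventuallyEq_of_mem hmem fun w hw => hpd1 γ w hw
  have hdiffF' : DifferentiableAt ℝ (fderiv ℝ f) v :=
    ((hsm v hv).fderiv_right (m := 1) (WithTop.coe_le_coe.mpr le_top)).differentiableAt one_ne_zero
  have hpdiff : ∀ γ : Fin n₂, DifferentiableAt ℝ (fun v' => fderiv ℝ f v' (Pi.single γ 1)) v :=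
    fun γ => hdiffF'.clm_apply (differentiableAt_const _)
  have hsnd : ∀ γ δ : Fin n₂, pd δ (fun v' => pd γ f v') v
      = fderiv ℝ (fderiv ℝ f) v (Pi.single δ 1) (Pi.single γ 1) := by
    intro γ δ
    simp only [pd]
    rw [fderiv_clm_apply hdiffF' (differentiableAt_const _)]
    simp
  have hsymm : fderiv ℝ (fderiv ℝ f) v (Pi.single β 1) (Pi.single α 1)
      = fderiv ℝ (fderiv ℝ f) v (Pi.single α 1) (Pi.single β 1) := by
    have h2 : ContDiffAt ℝ 2 f v := (hsm v hv).of_le (WithTop.coe_le_coe.mpr le_top)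
    exact (h2.isSymmSndFDerivAt (by simp [minSmoothness_of_isRCLikeNormedField])) _ _
  have key : ∀ γ δ : Fin n₂, pd δ (fun v' => pd γ (BoldG k x u y) v') v
      = D * fderiv ℝ (fderiv ℝ f) v (Pi.single δ 1) (Pi.single γ 1) := by
    intro γ δ
    have h1 : pd δ (fun v' => pd γ (BoldG k x u y) v') v
        = pd δ (fun v' => E γ + D * pd γ f v') v := by
      show fderiv ℝ (fun v' => pd γ (BoldG k x u y) v') v (Pi.single δ 1)
        = fderiv ℝ (fun v' => E γ + D * pd γ f v') v (Pi.single δ 1)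
      rw [(hev γ).fderiv_eq]
    rw [h1]
    have h2 := hsnd γ δ
    simp only [pd] at h2 ⊢
    rw [fderiv_const_add, fderiv_const_mul (hpdiff γ)]
    simp [h2]
  have hg2 : g₂ α β u v = (1 / 2) * fderiv ℝ (fderiv ℝ f) v (Pi.single α 1) (Pi.single β 1) := by
    rw [hg₂, ← hsnd β α]
  constructor
  · rw [key α β, hsymm, hg2, hDdef]
    ring
  · rw [key α β, key β α, hsymm]
end

section
/- Let (f₂M₁ ×_{f₁} M₂, F) be a doubly warped product Finsler manifold of dimension n = n₁ + n₂ that is C-reducible (its Matsumoto tensor 𝐌 vanishes). Then contracting the component 𝐌_{αjk} with yʲy^k yields −(f₁²f₂²F₁²F₂²/((n+1)F²))·I_α = 0, hence the mean Cartan torsion I_α of F₂ (lifted) vanishes; symmetrically I_i of F₁ vanishes; therefore F is Riemannian. -/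
/-- Fundamental tensor `g_{ab} = (1/2)∂²F²/∂y^a∂y^b`. -/
noncomputable def fundG {ι : Type*} [Fintype ι] [DecidableEq ι]
    (Fsq : (ι → ℝ) → ℝ) (a b : ι) (y : ι → ℝ) : ℝ :=
  (1 / 2) * pd a (pd b Fsq) y

/-- Cartan tensor `C_{abc} = (1/2)∂g_{ab}/∂y^c`. -/
noncomputable def cart {ι : Type*} [Fintype ι] [DecidableEq ι]
    (Fsq : (ι → ℝ) → ℝ) (a b c : ι) (y : ι → ℝ) : ℝ :=
  (1 / 2) * pd c (fundG Fsq a b) y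

/-- Inverse fundamental tensor `g^{ab}` (matrix inverse). -/
noncomputable def ginvE {ι : Type*} [Fintype ι] [DecidableEq ι]
    (Fsq : (ι → ℝ) → ℝ) (a b : ι) (y : ι → ℝ) : ℝ :=
  (Matrix.of fun a' b' => fundG Fsq a' b' y)⁻¹ a b

/-- Mean Cartan torsion `I_a = g^{bc} C_{abc}`. -/
noncomputable def meanI {ι : Type*} [Fintype ι] [DecidableEq ι]
    (Fsq : (ι → ℝ) → ℝ) (a : ι) (y : ι → ℝ) : ℝ :=
  ∑ b, ∑ c, ginvE Fsq b c y * cart Fsq a b c y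

/-- The angular metric `h_{ab} = g_{ab} − F⁻² y_a y_b` with `y_a = g_{ab} y^b`. -/
noncomputable def angular {ι : Type*} [Fintype ι] [DecidableEq ι]
    (Fsq : (ι → ℝ) → ℝ) (a b : ι) (y : ι → ℝ) : ℝ :=
  fundG Fsq a b y - (Fsq y)⁻¹ * (∑ c, fundG Fsq a c y * y c) * (∑ c, fundG Fsq b c y * y c)

/-- Matsumoto tensor `M_{abc} = C_{abc} − (1/(n+1))(I_a h_{bc} + I_b h_{ac} + I_c h_{ab})`. -/
noncomputable def matsumoto {ι : Type*} [Fintype ι] [DecidableEq ι]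
    (n : ℕ) (Fsq : (ι → ℝ) → ℝ) (a b c : ι) (y : ι → ℝ) : ℝ :=
  cart Fsq a b c y - (1 / (n + 1)) *
    (meanI Fsq a y * angular Fsq b c y + meanI Fsq b y * angular Fsq a c y
      + meanI Fsq c y * angular Fsq a b y)

set_option maxHeartbeats 1000000
set_option linter.unusedSectionVars false
set_option linter.unusedVariables false


open Filter Topology

section general
variable {ι : Type*} [Fintype ι] [DecidableEq ι]

lemma clm_apply_eq_sum (φ : ((ι → ℝ)) →L[ℝ] ℝ) (y : ι → ℝ) :
    φ y = ∑ b, y b * φ (Pi.single b 1) := by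
  conv_lhs => rw [← Finset.univ_sum_single y]
  rw [map_sum]
  refine Finset.sum_congr rfl fun b _ => ?_
  have h : Pi.single b (y b) = y b • (Pi.single b 1 : ι → ℝ) := by
    rw [← Pi.single_smul, smul_eq_mul, mul_one]
  rw [h, map_smul, smul_eq_mul]

lemma pd_contDiffOn {f : (ι → ℝ) → ℝ} {s : Set (ι → ℝ)} (hf : ContDiffOn ℝ (⊤ : ℕ∞) f s)
    (hs : IsOpen s) (i : ι) : ContDiffOn ℝ (⊤ : ℕ∞) (pd i f) s := by
  have h := hf.fderiv_of_isOpen (m := (⊤ : ℕ∞)) hs (by simp)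
  exact h.clm_apply contDiffOn_const

lemma cdo_diffAt {E F : Type*} [NormedAddCommGroup E] [NormedSpace ℝ E]
    [NormedAddCommGroup F] [NormedSpace ℝ F]
    {f : E → F} {s : Set E} (hf : ContDiffOn ℝ (⊤ : ℕ∞) f s) (hs : IsOpen s)
    {y : E} (hy : y ∈ s) : DifferentiableAt ℝ f y :=
  (hf.contDiffAt (hs.mem_nhds hy)).differentiableAt (by simp)

lemma pd_comm {f : (ι → ℝ) → ℝ} {s : Set (ι → ℝ)} (hf : ContDiffOn ℝ (⊤ : ℕ∞) f s) (hs : IsOpen s)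
    {y : ι → ℝ} (hy : y ∈ s) (a b : ι) : pd a (pd b f) y = pd b (pd a f) y := by
  have hf' : ContDiffOn ℝ (⊤ : ℕ∞) (fun z => fderiv ℝ f z) s := hf.fderiv_of_isOpen (m := (⊤ : ℕ∞)) hs (by simp)
  have hd' : DifferentiableAt ℝ (fun z => fderiv ℝ f z) y := cdo_diffAt hf' hs hy
  have key : ∀ v w : ι → ℝ,
      fderiv ℝ (fun z => fderiv ℝ f z v) y w = fderiv ℝ (fderiv ℝ f) y w v := by
    intro v w
    rw [fderiv_clm_apply hd' (differentiableAt_const v)]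
    simp
  have hsymm : ∀ v w : ι → ℝ, fderiv ℝ (fderiv ℝ f) y v w = fderiv ℝ (fderiv ℝ f) y w v := by
    intro v w
    refine second_derivative_symmetric_of_eventually (f := f) ?_ hd'.hasFDerivAt v w
    filter_upwards [hs.mem_nhds hy] with z hz
    exact (cdo_diffAt hf hs hz).hasFDerivAt
  have ra : pd a (pd b f) y = fderiv ℝ (fun z => fderiv ℝ f z (Pi.single b 1)) y (Pi.single a 1) := rfl
  have rb : pd b (pd a f) y = fderiv ℝ (fun z => fderiv ℝ f z (Pi.single a 1)) y (Pi.single b 1) := rfl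
  rw [ra, rb, key, key, hsymm]

lemma euler {E : Type*} [NormedAddCommGroup E] [NormedSpace ℝ E] {f : E → ℝ} {y : E} (k : ℕ)
    (hdiff : DifferentiableAt ℝ f y)
    (hhom : ∀ c : ℝ, 0 < c → f (c • y) = c ^ k * f y) :
    fderiv ℝ f y y = k * f y := by
  have hsm : HasDerivAt (fun t : ℝ => t • y) ((1:ℝ) • y) 1 := (hasDerivAt_id 1).smul_const y
  have hF : HasFDerivAt f (fderiv ℝ f y) ((1:ℝ) • y) := by
    rw [one_smul]; exact hdiff.hasFDerivAt
  have h1 : HasDerivAt (fun t : ℝ => f (t • y)) (fderiv ℝ f y ((1:ℝ) • y)) 1 :=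
    hF.comp_hasDerivAt 1 hsm
  rw [one_smul] at h1
  have h2 : HasDerivAt (fun t : ℝ => t ^ k * f y) ((k : ℝ) * f y) 1 := by
    simpa using (hasDerivAt_pow k (1:ℝ)).mul_const (f y)
  have heq : (fun t : ℝ => f (t • y)) =ᶠ[𝓝 (1:ℝ)] fun t => t ^ k * f y := by
    filter_upwards [Ioi_mem_nhds (by norm_num : (0:ℝ) < 1)] with t ht
    exact hhom t ht
  exact h1.unique (h2.congr_of_eventuallyEq heq)

lemma fderiv_hom {E : Type*} [NormedAddCommGroup E] [NormedSpace ℝ E] {f : E → ℝ} (k : ℕ)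
    (hdiff : ∀ z : E, z ≠ 0 → DifferentiableAt ℝ f z)
    (hhom : ∀ c : ℝ, 0 < c → ∀ z : E, z ≠ 0 → f (c • z) = c ^ (k + 1) * f z)
    {y : E} (hy : y ≠ 0) (c : ℝ) (hc : 0 < c) (v : E) :
    fderiv ℝ f (c • y) v = c ^ k * fderiv ℝ f y v := by
  have hcy : c • y ≠ 0 := smul_ne_zero hc.ne' hy
  have hL : HasFDerivAt (fun z : E => c • z) (c • ContinuousLinearMap.id ℝ E) y :=
    (c • ContinuousLinearMap.id ℝ E).hasFDerivAt
  have h1 : HasFDerivAt (fun z : E => f (c • z))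
      ((fderiv ℝ f (c • y)).comp (c • ContinuousLinearMap.id ℝ E)) y :=
    (hdiff _ hcy).hasFDerivAt.comp y hL
  have heq : (fun z : E => f (c • z)) =ᶠ[𝓝 y] fun z => c ^ (k + 1) * f z := by
    filter_upwards [isOpen_compl_singleton.mem_nhds (by simpa using hy)] with z hz
    exact hhom c hc z hz
  have h2 : HasFDerivAt (fun z : E => f (c • z)) (c ^ (k + 1) • fderiv ℝ f y) y := by
    refine HasFDerivAt.congr_of_eventuallyEq ?_ heq
    exact ((hdiff y hy).hasFDerivAt.const_mul _)
  have := h1.unique h2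
  have happ := congrArg (fun (L : E →L[ℝ] ℝ) => L v) this
  simp only [ContinuousLinearMap.comp_apply, ContinuousLinearMap.smul_apply,
    ContinuousLinearMap.coe_smul', Pi.smul_apply, ContinuousLinearMap.id_apply,
    smul_eq_mul] at happ
  -- happ : fderiv ℝ f (c • y) (c • v) = c^(k+1) * fderiv ℝ f y v  (roughly)
  have : c * fderiv ℝ f (c • y) v = c ^ (k + 1) * fderiv ℝ f y v := by
    rw [← happ]
    rw [map_smul]
    simp [smul_eq_mul]
  field_simp [pow_succ] at this ⊢
  exact mul_left_cancel₀ hc.ne' (by rw [this]; ring)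

end general

section factor
variable {ι : Type*} [Fintype ι] [DecidableEq ι]

lemma sopen : IsOpen {y : ι → ℝ | y ≠ 0} := isOpen_ne

lemma fderiv_eq_sum (g : (ι → ℝ) → ℝ) (y : ι → ℝ) :
    fderiv ℝ g y y = ∑ c, y c * pd c g y := clm_apply_eq_sum _ y

lemma pd_const_mul {g : (ι → ℝ) → ℝ} {y : ι → ℝ} (hg : DifferentiableAt ℝ g y)
    (r : ℝ) (c : ι) : pd c (fun z => r * g z) y = r * pd c g y := by
  unfold pd
  rw [fderiv_const_mul hg]
  simp

variable {F : (ι → ℝ) → ℝ}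
  (hsm : ContDiffOn ℝ (⊤ : ℕ∞) F {y : ι → ℝ | y ≠ 0})
  (hhom : ∀ c : ℝ, 0 < c → ∀ y, F (c • y) = c ^ 2 * F y)

section
include hsm

lemma Fdiff {y : ι → ℝ} (hy : y ≠ 0) : DifferentiableAt ℝ F y := cdo_diffAt hsm sopen hy

lemma pdFdiff (b : ι) {y : ι → ℝ} (hy : y ≠ 0) : DifferentiableAt ℝ (pd b F) y :=
  cdo_diffAt (pd_contDiffOn hsm sopen b) sopen hy

lemma pdpdFdiff (a b : ι) {y : ι → ℝ} (hy : y ≠ 0) :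
    DifferentiableAt ℝ (pd a (pd b F)) y :=
  cdo_diffAt (pd_contDiffOn (pd_contDiffOn hsm sopen b) sopen a) sopen hy

include hhom

lemma pd1_hom (b : ι) {z : ι → ℝ} (hz : z ≠ 0) {c : ℝ} (hc : 0 < c) :
    pd b F (c • z) = c * pd b F z := by
  have := fderiv_hom (f := F) 1 (fun z hz => Fdiff hsm hz)
    (fun c hc z _ => hhom c hc z) hz c hc (Pi.single b 1)
  simpa [pd] using this

lemma euler2 {y : ι → ℝ} (hy : y ≠ 0) : fderiv ℝ F y y = 2 * F y := by
  have := euler 2 (Fdiff hsm hy) (fun c hc => hhom c hc y)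
  simpa using this

lemma euler1 (b : ι) {y : ι → ℝ} (hy : y ≠ 0) : fderiv ℝ (pd b F) y y = pd b F y := by
  have := euler 1 (pdFdiff hsm b hy)
    (fun c hc => by simpa using pd1_hom hsm hhom b hy hc)
  simpa using this

lemma euler0 (a b : ι) {y : ι → ℝ} (hy : y ≠ 0) : fderiv ℝ (pd a (pd b F)) y y = 0 := by
  have hh : ∀ c : ℝ, 0 < c → pd a (pd b F) (c • y) = c ^ (0:ℕ) * pd a (pd b F) y := by
    intro c hc
    have := fderiv_hom (f := pd b F) 0 (fun z hz => pdFdiff hsm b hz)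
      (fun c hc z hz => by simpa using pd1_hom hsm hhom b hz hc) hy c hc (Pi.single a 1)
    simpa [pd] using this
  have := euler 0 (pdpdFdiff hsm a b hy) hh
  simpa using this

lemma sumC1 (a : ι) {y : ι → ℝ} (hy : y ≠ 0) :
    ∑ c, fundG F a c y * y c = (1/2) * pd a F y := by
  have h : ∀ c, fundG F a c y * y c = (1/2) * (y c * pd c (pd a F) y) := by
    intro c
    unfold fundG
    rw [pd_comm hsm sopen hy a c]
    ring
  rw [Finset.sum_congr rfl (fun c _ => h c), ← Finset.mul_sum, ← fderiv_eq_sum,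
    euler1 hsm hhom a hy]

lemma sumC2 {y : ι → ℝ} (hy : y ≠ 0) :
    ∑ b, ∑ c, fundG F b c y * y b * y c = F y := by
  have h : ∀ b, ∑ c, fundG F b c y * y b * y c = y b * ((1/2) * pd b F y) := by
    intro b
    have : ∑ c, fundG F b c y * y b * y c = y b * ∑ c, fundG F b c y * y c := by
      rw [Finset.mul_sum]; exact Finset.sum_congr rfl fun c _ => by ring
    rw [this, sumC1 hsm hhom b hy]
  rw [Finset.sum_congr rfl (fun b _ => h b)]
  have : ∑ b, y b * ((1/2) * pd b F y) = (1/2) * ∑ b, y b * pd b F y := by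
    rw [Finset.mul_sum]; exact Finset.sum_congr rfl fun b _ => by ring
  rw [this, ← fderiv_eq_sum, euler2 hsm hhom hy]
  ring

lemma sumC3 (a b : ι) {y : ι → ℝ} (hy : y ≠ 0) :
    ∑ c, cart F a b c y * y c = 0 := by
  have hpd : ∀ c, cart F a b c y = (1/2) * ((1/2) * pd c (pd a (pd b F)) y) := by
    intro c
    unfold cart
    congr 1
    exact pd_const_mul (pdpdFdiff hsm a b hy) (1/2) c
  have : ∑ c, cart F a b c y * y c = (1/4) * ∑ c, y c * pd c (pd a (pd b F)) y := by
    rw [Finset.mul_sum]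
    exact Finset.sum_congr rfl (fun c _ => by rw [hpd c]; ring)
  rw [this, ← fderiv_eq_sum, euler0 hsm hhom a b hy]
  ring

lemma cart_symm (a b c : ι) {y : ι → ℝ} (hy : y ≠ 0) :
    cart F a b c y = cart F c b a y := by
  unfold cart
  have e1 : pd c (fundG F a b) y = (1/2) * pd c (pd a (pd b F)) y :=
    pd_const_mul (pdpdFdiff hsm a b hy) (1/2) c
  have e2 : pd a (fundG F c b) y = (1/2) * pd a (pd c (pd b F)) y :=
    pd_const_mul (pdpdFdiff hsm c b hy) (1/2) a
  rw [e1, e2, pd_comm (pd_contDiffOn hsm sopen b) sopen hy c a]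

lemma sumC3' (b c : ι) {y : ι → ℝ} (hy : y ≠ 0) :
    ∑ a, cart F a b c y * y a = 0 := by
  rw [Finset.sum_congr rfl (fun a _ => by rw [cart_symm hsm hhom a b c hy])]
  exact sumC3 hsm hhom c b hy

end
end factor

section d23
variable {κ : Type*} [Fintype κ] [DecidableEq κ]

noncomputable def d2 (g : (κ → ℝ) → ℝ) (u v : κ → ℝ) (y : κ → ℝ) : ℝ :=
  fderiv ℝ (fun z => fderiv ℝ g z u) y v

noncomputable def d3 (g : (κ → ℝ) → ℝ) (u v r : κ → ℝ) (y : κ → ℝ) : ℝ :=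
  fderiv ℝ (fun z => d2 g u v z) y r

lemma d2_zero_left (g : (κ → ℝ) → ℝ) (v y : κ → ℝ) : d2 g 0 v y = 0 := by
  unfold d2
  have : (fun z : κ → ℝ => fderiv ℝ g z 0) = fun _ => (0:ℝ) := by
    funext z; simp
  rw [this, fderiv_fun_const]
  simp

lemma d2_zero_right (g : (κ → ℝ) → ℝ) (u y : κ → ℝ) : d2 g u 0 y = 0 := by
  unfold d2; simp

lemma d3_zero₁ (g : (κ → ℝ) → ℝ) (v r y : κ → ℝ) : d3 g 0 v r y = 0 := by
  unfold d3
  have : (fun z : κ → ℝ => d2 g 0 v z) = fun _ => (0:ℝ) := by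
    funext z; rw [d2_zero_left]
  rw [this, fderiv_fun_const]; simp

lemma d3_zero₂ (g : (κ → ℝ) → ℝ) (u r y : κ → ℝ) : d3 g u 0 r y = 0 := by
  unfold d3
  have : (fun z : κ → ℝ => d2 g u 0 z) = fun _ => (0:ℝ) := by
    funext z; rw [d2_zero_right]
  rw [this, fderiv_fun_const]; simp

lemma d3_zero₃ (g : (κ → ℝ) → ℝ) (u v y : κ → ℝ) : d3 g u v 0 y = 0 := by
  unfold d3; simp

lemma pdv_contDiffOn {g : (κ → ℝ) → ℝ} {s : Set (κ → ℝ)} (hg : ContDiffOn ℝ (⊤ : ℕ∞) g s)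
    (hs : IsOpen s) (u : κ → ℝ) : ContDiffOn ℝ (⊤ : ℕ∞) (fun z => fderiv ℝ g z u) s :=
  (hg.fderiv_of_isOpen (m := (⊤ : ℕ∞)) hs (by simp)).clm_apply contDiffOn_const

lemma d2_contDiffOn {g : (κ → ℝ) → ℝ} {s : Set (κ → ℝ)} (hg : ContDiffOn ℝ (⊤ : ℕ∞) g s)
    (hs : IsOpen s) (u v : κ → ℝ) : ContDiffOn ℝ (⊤ : ℕ∞) (fun z => d2 g u v z) s :=
  pdv_contDiffOn (pdv_contDiffOn hg hs u) hs v

-- identification with pd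
lemma pd_pd_eq_d2 (g : (κ → ℝ) → ℝ) (a b : κ) (y : κ → ℝ) :
    pd a (pd b g) y = d2 g (Pi.single b 1) (Pi.single a 1) y := rfl

lemma pd_pd_pd_eq_d3 (g : (κ → ℝ) → ℝ) (a b c : κ) (y : κ → ℝ) :
    pd c (pd a (pd b g)) y = d3 g (Pi.single b 1) (Pi.single a 1) (Pi.single c 1) y := rfl

end d23

section warped
variable {n₁ n₂ : ℕ}

lemma fderiv_comp_clm {E F : Type*} [NormedAddCommGroup E] [NormedSpace ℝ E]
    [NormedAddCommGroup F] [NormedSpace ℝ F]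
    (L : E →L[ℝ] F) (g : F → ℝ) {w : E} (hg : DifferentiableAt ℝ g (L w)) (v : E) :
    fderiv ℝ (fun w' => g (L w')) w v = fderiv ℝ g (L w) (L v) := by
  have h : HasFDerivAt (fun w' => g (L w')) ((fderiv ℝ g (L w)).comp L) w :=
    hg.hasFDerivAt.comp w L.hasFDerivAt
  rw [h.fderiv]
  rfl

noncomputable def L1 (n₁ n₂ : ℕ) : ((Fin n₁ ⊕ Fin n₂) → ℝ) →L[ℝ] (Fin n₁ → ℝ) :=
  ContinuousLinearMap.pi (fun i => ContinuousLinearMap.proj (Sum.inl i))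

noncomputable def L2 (n₁ n₂ : ℕ) : ((Fin n₁ ⊕ Fin n₂) → ℝ) →L[ℝ] (Fin n₂ → ℝ) :=
  ContinuousLinearMap.pi (fun α => ContinuousLinearMap.proj (Sum.inr α))

lemma L1_apply (w : (Fin n₁ ⊕ Fin n₂) → ℝ) : L1 n₁ n₂ w = w ∘ Sum.inl := rfl
lemma L2_apply (w : (Fin n₁ ⊕ Fin n₂) → ℝ) : L2 n₁ n₂ w = w ∘ Sum.inr := rfl

lemma single_inl_comp_inl (i : Fin n₁) :
    ((Pi.single (Sum.inl i : Fin n₁ ⊕ Fin n₂) (1:ℝ)) ∘ Sum.inl : Fin n₁ → ℝ) = Pi.single i 1 := by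
  funext j
  simp [Function.comp, Pi.single_apply, Sum.inl.injEq]

lemma single_inr_comp_inl (α : Fin n₂) :
    ((Pi.single (Sum.inr α : Fin n₁ ⊕ Fin n₂) (1:ℝ)) ∘ Sum.inl : Fin n₁ → ℝ) = 0 := by
  funext j
  simp [Function.comp, Pi.single_apply]

lemma single_inr_comp_inr (α : Fin n₂) :
    ((Pi.single (Sum.inr α : Fin n₁ ⊕ Fin n₂) (1:ℝ)) ∘ Sum.inr : Fin n₂ → ℝ) = Pi.single α 1 := by
  funext β
  simp [Function.comp, Pi.single_apply, Sum.inr.injEq]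

lemma single_inl_comp_inr (i : Fin n₁) :
    ((Pi.single (Sum.inl i : Fin n₁ ⊕ Fin n₂) (1:ℝ)) ∘ Sum.inr : Fin n₂ → ℝ) = 0 := by
  funext β
  simp [Function.comp, Pi.single_apply]

lemma fderiv_warp (r₁ r₂ : ℝ) (g₁ : (Fin n₁ → ℝ) → ℝ) (g₂ : (Fin n₂ → ℝ) → ℝ)
    {w : (Fin n₁ ⊕ Fin n₂) → ℝ}
    (hg₁ : DifferentiableAt ℝ g₁ (w ∘ Sum.inl)) (hg₂ : DifferentiableAt ℝ g₂ (w ∘ Sum.inr))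
    (v : (Fin n₁ ⊕ Fin n₂) → ℝ) :
    fderiv ℝ (fun w' => r₁ * g₁ (w' ∘ Sum.inl) + r₂ * g₂ (w' ∘ Sum.inr)) w v
      = r₁ * fderiv ℝ g₁ (w ∘ Sum.inl) (v ∘ Sum.inl)
        + r₂ * fderiv ℝ g₂ (w ∘ Sum.inr) (v ∘ Sum.inr) := by
  have d₁ : DifferentiableAt ℝ (fun w' => g₁ (w' ∘ Sum.inl)) w :=
    hg₁.comp w (L1 n₁ n₂).differentiableAt
  have d₂ : DifferentiableAt ℝ (fun w' => g₂ (w' ∘ Sum.inr)) w :=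
    hg₂.comp w (L2 n₁ n₂).differentiableAt
  have e₁ : fderiv ℝ (fun w' => g₁ (w' ∘ Sum.inl)) w v
      = fderiv ℝ g₁ (w ∘ Sum.inl) (v ∘ Sum.inl) :=
    fderiv_comp_clm (L1 n₁ n₂) g₁ hg₁ v
  have e₂ : fderiv ℝ (fun w' => g₂ (w' ∘ Sum.inr)) w v
      = fderiv ℝ g₂ (w ∘ Sum.inr) (v ∘ Sum.inr) :=
    fderiv_comp_clm (L2 n₁ n₂) g₂ hg₂ v
  rw [fderiv_fun_add ((d₁.const_mul r₁)) ((d₂.const_mul r₂))]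
  rw [ContinuousLinearMap.add_apply]
  rw [fderiv_const_mul d₁, fderiv_const_mul d₂]
  simp only [ContinuousLinearMap.coe_smul', Pi.smul_apply, smul_eq_mul]
  rw [e₁, e₂]

end warped

section blocks
variable {n₁ n₂ : ℕ} {A : (Fin n₁ → ℝ) → ℝ} {B : (Fin n₂ → ℝ) → ℝ} {c₁ c₂ : ℝ}
  {W : ((Fin n₁ ⊕ Fin n₂) → ℝ) → ℝ}
  (hW : ∀ w, W w = c₁ * A (w ∘ Sum.inl) + c₂ * B (w ∘ Sum.inr))
  (hA : ContDiffOn ℝ (⊤ : ℕ∞) A {y | y ≠ 0}) (hB : ContDiffOn ℝ (⊤ : ℕ∞) B {y | y ≠ 0})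

lemma U_nhds {w : (Fin n₁ ⊕ Fin n₂) → ℝ} (h₁ : w ∘ Sum.inl ≠ 0) (h₂ : w ∘ Sum.inr ≠ 0) :
    {w' : (Fin n₁ ⊕ Fin n₂) → ℝ | w' ∘ Sum.inl ≠ 0 ∧ w' ∘ Sum.inr ≠ 0} ∈ nhds w := by
  have hopen : IsOpen {w' : (Fin n₁ ⊕ Fin n₂) → ℝ | w' ∘ Sum.inl ≠ 0 ∧ w' ∘ Sum.inr ≠ 0} := by
    have : {w' : (Fin n₁ ⊕ Fin n₂) → ℝ | w' ∘ Sum.inl ≠ 0 ∧ w' ∘ Sum.inr ≠ 0}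
        = (L1 n₁ n₂ ⁻¹' {y | y ≠ 0}) ∩ (L2 n₁ n₂ ⁻¹' {y | y ≠ 0}) := rfl
    rw [this]
    exact (sopen.preimage (L1 n₁ n₂).continuous).inter (sopen.preimage (L2 n₁ n₂).continuous)
  exact hopen.mem_nhds ⟨h₁, h₂⟩

include hW hA hB

lemma pd_W (a : Fin n₁ ⊕ Fin n₂) {w : (Fin n₁ ⊕ Fin n₂) → ℝ}
    (h₁ : w ∘ Sum.inl ≠ 0) (h₂ : w ∘ Sum.inr ≠ 0) :
    pd a W w = c₁ * fderiv ℝ A (w ∘ Sum.inl) ((Pi.single a 1) ∘ Sum.inl)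
      + c₂ * fderiv ℝ B (w ∘ Sum.inr) ((Pi.single a 1) ∘ Sum.inr) := by
  have hWe : W = fun w' => c₁ * A (w' ∘ Sum.inl) + c₂ * B (w' ∘ Sum.inr) := funext hW
  unfold pd
  rw [hWe]
  exact fderiv_warp c₁ c₂ A B (Fdiff hA h₁) (Fdiff hB h₂) _

lemma fundG_W (a b : Fin n₁ ⊕ Fin n₂) {w : (Fin n₁ ⊕ Fin n₂) → ℝ}
    (h₁ : w ∘ Sum.inl ≠ 0) (h₂ : w ∘ Sum.inr ≠ 0) :
    fundG W a b w = (1/2) * (c₁ * d2 A ((Pi.single b 1) ∘ Sum.inl) ((Pi.single a 1) ∘ Sum.inl) (w ∘ Sum.inl)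
      + c₂ * d2 B ((Pi.single b 1) ∘ Sum.inr) ((Pi.single a 1) ∘ Sum.inr) (w ∘ Sum.inr)) := by
  unfold fundG
  congr 1
  have heq : pd b W =ᶠ[nhds w] (fun w' =>
      c₁ * (fun z => fderiv ℝ A z ((Pi.single b 1) ∘ Sum.inl)) (w' ∘ Sum.inl)
      + c₂ * (fun z => fderiv ℝ B z ((Pi.single b 1) ∘ Sum.inr)) (w' ∘ Sum.inr)) := by
    filter_upwards [U_nhds h₁ h₂] with w' hw'
    exact pd_W hW hA hB b hw'.1 hw'.2
  show fderiv ℝ (pd b W) w (Pi.single a 1) = _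
  rw [heq.fderiv_eq]
  rw [fderiv_warp c₁ c₂ _ _
    (cdo_diffAt (pdv_contDiffOn hA sopen _) sopen h₁)
    (cdo_diffAt (pdv_contDiffOn hB sopen _) sopen h₂) (Pi.single a 1)]
  rfl

lemma cart_W (a b c : Fin n₁ ⊕ Fin n₂) {w : (Fin n₁ ⊕ Fin n₂) → ℝ}
    (h₁ : w ∘ Sum.inl ≠ 0) (h₂ : w ∘ Sum.inr ≠ 0) :
    cart W a b c w = (1/2) * ((c₁/2) * d3 A ((Pi.single b 1) ∘ Sum.inl) ((Pi.single a 1) ∘ Sum.inl) ((Pi.single c 1) ∘ Sum.inl) (w ∘ Sum.inl)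
      + (c₂/2) * d3 B ((Pi.single b 1) ∘ Sum.inr) ((Pi.single a 1) ∘ Sum.inr) ((Pi.single c 1) ∘ Sum.inr) (w ∘ Sum.inr)) := by
  unfold cart
  congr 1
  have heq : fundG W a b =ᶠ[nhds w] (fun w' =>
      (c₁/2) * (fun z => d2 A ((Pi.single b 1) ∘ Sum.inl) ((Pi.single a 1) ∘ Sum.inl) z) (w' ∘ Sum.inl)
      + (c₂/2) * (fun z => d2 B ((Pi.single b 1) ∘ Sum.inr) ((Pi.single a 1) ∘ Sum.inr) z) (w' ∘ Sum.inr)) := by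
    filter_upwards [U_nhds h₁ h₂] with w' hw'
    rw [fundG_W hW hA hB a b hw'.1 hw'.2]
    ring
  show fderiv ℝ (fundG W a b) w (Pi.single c 1) = _
  rw [heq.fderiv_eq]
  rw [fderiv_warp (c₁/2) (c₂/2) _ _
    (cdo_diffAt (d2_contDiffOn hA sopen _ _) sopen h₁)
    (cdo_diffAt (d2_contDiffOn hB sopen _ _) sopen h₂) (Pi.single c 1)]
  rfl

lemma fundG_W_ll (i j : Fin n₁) {w : (Fin n₁ ⊕ Fin n₂) → ℝ}
    (h₁ : w ∘ Sum.inl ≠ 0) (h₂ : w ∘ Sum.inr ≠ 0) :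
    fundG W (Sum.inl i) (Sum.inl j) w = c₁ * fundG A i j (w ∘ Sum.inl) := by
  rw [fundG_W hW hA hB _ _ h₁ h₂, single_inl_comp_inl, single_inl_comp_inl,
    single_inl_comp_inr, single_inl_comp_inr, d2_zero_left, ← pd_pd_eq_d2]
  unfold fundG
  ring

lemma fundG_W_rr (α β : Fin n₂) {w : (Fin n₁ ⊕ Fin n₂) → ℝ}
    (h₁ : w ∘ Sum.inl ≠ 0) (h₂ : w ∘ Sum.inr ≠ 0) :
    fundG W (Sum.inr α) (Sum.inr β) w = c₂ * fundG B α β (w ∘ Sum.inr) := by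
  rw [fundG_W hW hA hB _ _ h₁ h₂, single_inr_comp_inl, single_inr_comp_inl,
    single_inr_comp_inr, single_inr_comp_inr, d2_zero_left, ← pd_pd_eq_d2]
  unfold fundG
  ring

lemma fundG_W_lr (i : Fin n₁) (β : Fin n₂) {w : (Fin n₁ ⊕ Fin n₂) → ℝ}
    (h₁ : w ∘ Sum.inl ≠ 0) (h₂ : w ∘ Sum.inr ≠ 0) :
    fundG W (Sum.inl i) (Sum.inr β) w = 0 := by
  rw [fundG_W hW hA hB _ _ h₁ h₂, single_inr_comp_inl, single_inl_comp_inr,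
    d2_zero_left, d2_zero_right]
  ring

lemma fundG_W_rl (α : Fin n₂) (j : Fin n₁) {w : (Fin n₁ ⊕ Fin n₂) → ℝ}
    (h₁ : w ∘ Sum.inl ≠ 0) (h₂ : w ∘ Sum.inr ≠ 0) :
    fundG W (Sum.inr α) (Sum.inl j) w = 0 := by
  rw [fundG_W hW hA hB _ _ h₁ h₂, single_inr_comp_inl, single_inl_comp_inr,
    d2_zero_right, d2_zero_left]
  ring

lemma cart_W_lr (i : Fin n₁) (β : Fin n₂) (c : Fin n₁ ⊕ Fin n₂) {w : (Fin n₁ ⊕ Fin n₂) → ℝ}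
    (h₁ : w ∘ Sum.inl ≠ 0) (h₂ : w ∘ Sum.inr ≠ 0) :
    cart W (Sum.inl i) (Sum.inr β) c w = 0 := by
  rw [cart_W hW hA hB _ _ _ h₁ h₂, single_inr_comp_inl, single_inl_comp_inr,
    d3_zero₁, d3_zero₂]
  ring

lemma cart_W_rl (α : Fin n₂) (j : Fin n₁) (c : Fin n₁ ⊕ Fin n₂) {w : (Fin n₁ ⊕ Fin n₂) → ℝ}
    (h₁ : w ∘ Sum.inl ≠ 0) (h₂ : w ∘ Sum.inr ≠ 0) :
    cart W (Sum.inr α) (Sum.inl j) c w = 0 := by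
  rw [cart_W hW hA hB _ _ _ h₁ h₂, single_inr_comp_inl, single_inl_comp_inr,
    d3_zero₂, d3_zero₁]
  ring

lemma cart_W_llr (i j : Fin n₁) (γ : Fin n₂) {w : (Fin n₁ ⊕ Fin n₂) → ℝ}
    (h₁ : w ∘ Sum.inl ≠ 0) (h₂ : w ∘ Sum.inr ≠ 0) :
    cart W (Sum.inl i) (Sum.inl j) (Sum.inr γ) w = 0 := by
  rw [cart_W hW hA hB _ _ _ h₁ h₂, single_inr_comp_inl, single_inl_comp_inr,
    d3_zero₃, d3_zero₁]
  ring

lemma cart_W_rrl (α β : Fin n₂) (k : Fin n₁) {w : (Fin n₁ ⊕ Fin n₂) → ℝ}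
    (h₁ : w ∘ Sum.inl ≠ 0) (h₂ : w ∘ Sum.inr ≠ 0) :
    cart W (Sum.inr α) (Sum.inr β) (Sum.inl k) w = 0 := by
  rw [cart_W hW hA hB _ _ _ h₁ h₂, single_inr_comp_inl, single_inl_comp_inr,
    d3_zero₁, d3_zero₃]
  ring

lemma cart_W_lll (i j k : Fin n₁) {w : (Fin n₁ ⊕ Fin n₂) → ℝ}
    (h₁ : w ∘ Sum.inl ≠ 0) (h₂ : w ∘ Sum.inr ≠ 0) :
    cart W (Sum.inl i) (Sum.inl j) (Sum.inl k) w = c₁ * cart A i j k (w ∘ Sum.inl) := by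
  rw [cart_W hW hA hB _ _ _ h₁ h₂, single_inl_comp_inl, single_inl_comp_inl,
    single_inl_comp_inl, single_inl_comp_inr, d3_zero₁, ← pd_pd_pd_eq_d3]
  have hc : cart A i j k (w ∘ Sum.inl) = (1/2) * ((1/2) * pd k (pd i (pd j A)) (w ∘ Sum.inl)) := by
    unfold cart
    congr 1
    exact pd_const_mul (pdpdFdiff hA i j h₁) (1/2) k
  rw [hc]
  ring

lemma cart_W_rrr (α β γ : Fin n₂) {w : (Fin n₁ ⊕ Fin n₂) → ℝ}
    (h₁ : w ∘ Sum.inl ≠ 0) (h₂ : w ∘ Sum.inr ≠ 0) :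
    cart W (Sum.inr α) (Sum.inr β) (Sum.inr γ) w = c₂ * cart B α β γ (w ∘ Sum.inr) := by
  rw [cart_W hW hA hB _ _ _ h₁ h₂, single_inr_comp_inr, single_inr_comp_inr,
    single_inr_comp_inr, single_inr_comp_inl, d3_zero₁, ← pd_pd_pd_eq_d3]
  have hc : cart B α β γ (w ∘ Sum.inr) = (1/2) * ((1/2) * pd γ (pd α (pd β B)) (w ∘ Sum.inr)) := by
    unfold cart
    congr 1
    exact pd_const_mul (pdpdFdiff hB α β h₂) (1/2) γ
  rw [hc]
  ring

end blocks

section assemble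
variable {n₁ n₂ : ℕ} {A : (Fin n₁ → ℝ) → ℝ} {B : (Fin n₂ → ℝ) → ℝ} {c₁ c₂ : ℝ}
  {W : ((Fin n₁ ⊕ Fin n₂) → ℝ) → ℝ}
  (hW : ∀ w, W w = c₁ * A (w ∘ Sum.inl) + c₂ * B (w ∘ Sum.inr))
  (hA : ContDiffOn ℝ (⊤ : ℕ∞) A {y | y ≠ 0}) (hB : ContDiffOn ℝ (⊤ : ℕ∞) B {y | y ≠ 0})
  (hhomA : ∀ c : ℝ, 0 < c → ∀ y, A (c • y) = c ^ 2 * A y)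
  (hhomB : ∀ c : ℝ, 0 < c → ∀ y, B (c • y) = c ^ 2 * B y)
  {w : (Fin n₁ ⊕ Fin n₂) → ℝ}

section left
variable (h₁ : w ∘ Sum.inl ≠ 0) (h₂ : w ∘ Sum.inr ≠ 0)
include hW hA hB hhomA hhomB h₁ h₂

lemma ysuml (j : Fin n₁) :
    ∑ c, fundG W (Sum.inl j) c w * w c = c₁ * ((1/2) * pd j A (w ∘ Sum.inl)) := by
  rw [Fintype.sum_sum_type]
  have e1 : ∀ k : Fin n₁, fundG W (Sum.inl j) (Sum.inl k) w * w (Sum.inl k)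
      = c₁ * (fundG A j k (w ∘ Sum.inl) * (w ∘ Sum.inl) k) := fun k => by
    rw [fundG_W_ll hW hA hB j k h₁ h₂]; simp only [Function.comp_apply]; ring
  have e2 : ∀ β : Fin n₂, fundG W (Sum.inl j) (Sum.inr β) w * w (Sum.inr β) = 0 := fun β => by
    rw [fundG_W_lr hW hA hB j β h₁ h₂]; ring
  rw [Finset.sum_congr rfl fun k _ => e1 k, Finset.sum_congr rfl fun β _ => e2 β,
    Finset.sum_const_zero, add_zero, ← Finset.mul_sum, sumC1 hA hhomA j h₁]

lemma ysumr (β : Fin n₂) :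
    ∑ c, fundG W (Sum.inr β) c w * w c = c₂ * ((1/2) * pd β B (w ∘ Sum.inr)) := by
  rw [Fintype.sum_sum_type]
  have e1 : ∀ k : Fin n₁, fundG W (Sum.inr β) (Sum.inl k) w * w (Sum.inl k) = 0 := fun k => by
    rw [fundG_W_rl hW hA hB β k h₁ h₂]; ring
  have e2 : ∀ γ : Fin n₂, fundG W (Sum.inr β) (Sum.inr γ) w * w (Sum.inr γ)
      = c₂ * (fundG B β γ (w ∘ Sum.inr) * (w ∘ Sum.inr) γ) := fun γ => by
    rw [fundG_W_rr hW hA hB β γ h₁ h₂]; simp only [Function.comp_apply]; ring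
  rw [Finset.sum_congr rfl fun k _ => e1 k, Finset.sum_congr rfl fun γ _ => e2 γ,
    Finset.sum_const_zero, zero_add, ← Finset.mul_sum, sumC1 hB hhomB β h₂]

end left
end assemble
section assemble2
variable {n₁ n₂ : ℕ} {A : (Fin n₁ → ℝ) → ℝ} {B : (Fin n₂ → ℝ) → ℝ} {c₁ c₂ : ℝ}
  {W : ((Fin n₁ ⊕ Fin n₂) → ℝ) → ℝ}
  (hW : ∀ w, W w = c₁ * A (w ∘ Sum.inl) + c₂ * B (w ∘ Sum.inr))
  (hA : ContDiffOn ℝ (⊤ : ℕ∞) A {y | y ≠ 0}) (hB : ContDiffOn ℝ (⊤ : ℕ∞) B {y | y ≠ 0})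
  (hhomA : ∀ c : ℝ, 0 < c → ∀ y, A (c • y) = c ^ 2 * A y)
  (hhomB : ∀ c : ℝ, 0 < c → ∀ y, B (c • y) = c ^ 2 * B y)
  {w : (Fin n₁ ⊕ Fin n₂) → ℝ}
  (h₁ : w ∘ Sum.inl ≠ 0) (h₂ : w ∘ Sum.inr ≠ 0)

include hW hA hB hhomA hhomB h₁ h₂

lemma halfsumA : ∑ j, (1/2) * pd j A (w ∘ Sum.inl) * (w ∘ Sum.inl) j = A (w ∘ Sum.inl) := by
  have h2 : ∑ c, (w ∘ Sum.inl) c * pd c A (w ∘ Sum.inl) = 2 * A (w ∘ Sum.inl) := by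
    rw [← fderiv_eq_sum, euler2 hA hhomA h₁]
  calc ∑ j, (1/2) * pd j A (w ∘ Sum.inl) * (w ∘ Sum.inl) j
      = (1/2) * ∑ j, (w ∘ Sum.inl) j * pd j A (w ∘ Sum.inl) := by
        rw [Finset.mul_sum]; exact Finset.sum_congr rfl fun j _ => by ring
    _ = A (w ∘ Sum.inl) := by rw [h2]; ring

lemma halfsumB : ∑ β, (1/2) * pd β B (w ∘ Sum.inr) * (w ∘ Sum.inr) β = B (w ∘ Sum.inr) := by
  have h2 : ∑ c, (w ∘ Sum.inr) c * pd c B (w ∘ Sum.inr) = 2 * B (w ∘ Sum.inr) := by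
    rw [← fderiv_eq_sum, euler2 hB hhomB h₂]
  calc ∑ β, (1/2) * pd β B (w ∘ Sum.inr) * (w ∘ Sum.inr) β
      = (1/2) * ∑ β, (w ∘ Sum.inr) β * pd β B (w ∘ Sum.inr) := by
        rw [Finset.mul_sum]; exact Finset.sum_congr rfl fun β _ => by ring
    _ = B (w ∘ Sum.inr) := by rw [h2]; ring

lemma Icontr_l : ∑ j, meanI W (Sum.inl j) w * w (Sum.inl j) = 0 := by
  have hcart : ∀ b c : Fin n₁ ⊕ Fin n₂, ∑ j, cart W (Sum.inl j) b c w * w (Sum.inl j) = 0 := by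
    rintro (k | β) c
    · rcases c with l | γ
      · have e : ∀ j, cart W (Sum.inl j) (Sum.inl k) (Sum.inl l) w * w (Sum.inl j)
            = c₁ * (cart A j k l (w ∘ Sum.inl) * (w ∘ Sum.inl) j) := fun j => by
          rw [cart_W_lll hW hA hB j k l h₁ h₂]; simp only [Function.comp_apply]; ring
        rw [Finset.sum_congr rfl fun j _ => e j, ← Finset.mul_sum,
          sumC3' hA hhomA k l h₁, mul_zero]
      · exact Finset.sum_eq_zero fun j _ => by
          rw [cart_W_llr hW hA hB j k γ h₁ h₂, zero_mul]
    · exact Finset.sum_eq_zero fun j _ => by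
        rw [cart_W_lr hW hA hB j β c h₁ h₂, zero_mul]
  calc ∑ j, meanI W (Sum.inl j) w * w (Sum.inl j)
      = ∑ j, ∑ b, ∑ c, ginvE W b c w * (cart W (Sum.inl j) b c w * w (Sum.inl j)) := by
        refine Finset.sum_congr rfl fun j _ => ?_
        unfold meanI
        rw [Finset.sum_mul]
        refine Finset.sum_congr rfl fun b _ => ?_
        rw [Finset.sum_mul]
        exact Finset.sum_congr rfl fun c _ => by ring
    _ = ∑ b, ∑ c, ginvE W b c w * ∑ j, cart W (Sum.inl j) b c w * w (Sum.inl j) := by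
        rw [Finset.sum_comm]
        refine Finset.sum_congr rfl fun b _ => ?_
        rw [Finset.sum_comm]
        exact Finset.sum_congr rfl fun c _ => by rw [Finset.mul_sum]
    _ = 0 := Finset.sum_eq_zero fun b _ => Finset.sum_eq_zero fun c _ => by
        rw [hcart b c, mul_zero]

lemma Icontr_r : ∑ β, meanI W (Sum.inr β) w * w (Sum.inr β) = 0 := by
  have hcart : ∀ b c : Fin n₁ ⊕ Fin n₂, ∑ β, cart W (Sum.inr β) b c w * w (Sum.inr β) = 0 := by
    rintro (k | β') c
    · exact Finset.sum_eq_zero fun β _ => by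
        rw [cart_W_rl hW hA hB β k c h₁ h₂, zero_mul]
    · rcases c with l | γ
      · exact Finset.sum_eq_zero fun β _ => by
          rw [cart_W_rrl hW hA hB β β' l h₁ h₂, zero_mul]
      · have e : ∀ β, cart W (Sum.inr β) (Sum.inr β') (Sum.inr γ) w * w (Sum.inr β)
            = c₂ * (cart B β β' γ (w ∘ Sum.inr) * (w ∘ Sum.inr) β) := fun β => by
          rw [cart_W_rrr hW hA hB β β' γ h₁ h₂]; simp only [Function.comp_apply]; ring
        rw [Finset.sum_congr rfl fun β _ => e β, ← Finset.mul_sum,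
          sumC3' hB hhomB β' γ h₂, mul_zero]
  calc ∑ β, meanI W (Sum.inr β) w * w (Sum.inr β)
      = ∑ β, ∑ b, ∑ c, ginvE W b c w * (cart W (Sum.inr β) b c w * w (Sum.inr β)) := by
        refine Finset.sum_congr rfl fun β _ => ?_
        unfold meanI
        rw [Finset.sum_mul]
        refine Finset.sum_congr rfl fun b _ => ?_
        rw [Finset.sum_mul]
        exact Finset.sum_congr rfl fun c _ => by ring
    _ = ∑ b, ∑ c, ginvE W b c w * ∑ β, cart W (Sum.inr β) b c w * w (Sum.inr β) := by
        rw [Finset.sum_comm]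
        refine Finset.sum_congr rfl fun b _ => ?_
        rw [Finset.sum_comm]
        exact Finset.sum_congr rfl fun c _ => by rw [Finset.mul_sum]
    _ = 0 := Finset.sum_eq_zero fun b _ => Finset.sum_eq_zero fun c _ => by
        rw [hcart b c, mul_zero]

lemma Hll_eq :
    ∑ j, ∑ k, angular W (Sum.inl j) (Sum.inl k) w * w (Sum.inl j) * w (Sum.inl k)
      = c₁ * A (w ∘ Sum.inl)
        - (W w)⁻¹ * (c₁ * A (w ∘ Sum.inl)) * (c₁ * A (w ∘ Sum.inl)) := by
  have hpt : ∀ j k : Fin n₁,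
      angular W (Sum.inl j) (Sum.inl k) w * w (Sum.inl j) * w (Sum.inl k)
        = c₁ * (fundG A j k (w ∘ Sum.inl) * (w ∘ Sum.inl) j * (w ∘ Sum.inl) k)
          - (W w)⁻¹ * c₁ * c₁ * (((1/2) * pd j A (w ∘ Sum.inl) * (w ∘ Sum.inl) j)
            * ((1/2) * pd k A (w ∘ Sum.inl) * (w ∘ Sum.inl) k)) := by
    intro j k
    unfold angular
    rw [fundG_W_ll hW hA hB j k h₁ h₂, ysuml hW hA hB hhomA hhomB h₁ h₂ j,
      ysuml hW hA hB hhomA hhomB h₁ h₂ k]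
    simp only [Function.comp_apply]
    ring
  rw [Finset.sum_congr rfl fun j _ => Finset.sum_congr rfl fun k _ => hpt j k]
  rw [Finset.sum_congr rfl fun j (_ : j ∈ Finset.univ) => Finset.sum_sub_distrib _ _,
    Finset.sum_sub_distrib]
  have h1 : ∑ j, ∑ k, c₁ * (fundG A j k (w ∘ Sum.inl) * (w ∘ Sum.inl) j * (w ∘ Sum.inl) k)
      = c₁ * A (w ∘ Sum.inl) := by
    simp_rw [← Finset.mul_sum]
    rw [sumC2 hA hhomA h₁]
  have h2 : ∑ j, ∑ k, (W w)⁻¹ * c₁ * c₁ * (((1/2) * pd j A (w ∘ Sum.inl) * (w ∘ Sum.inl) j)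
        * ((1/2) * pd k A (w ∘ Sum.inl) * (w ∘ Sum.inl) k))
      = (W w)⁻¹ * c₁ * c₁ * (A (w ∘ Sum.inl) * A (w ∘ Sum.inl)) := by
    have e1 : ∀ j : Fin n₁, ∑ k, (W w)⁻¹ * c₁ * c₁ * (((1/2) * pd j A (w ∘ Sum.inl) * (w ∘ Sum.inl) j)
          * ((1/2) * pd k A (w ∘ Sum.inl) * (w ∘ Sum.inl) k))
        = ((W w)⁻¹ * c₁ * c₁ * ((1/2) * pd j A (w ∘ Sum.inl) * (w ∘ Sum.inl) j))
          * ∑ k, (1/2) * pd k A (w ∘ Sum.inl) * (w ∘ Sum.inl) k := fun j => by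
      rw [Finset.mul_sum]
      exact Finset.sum_congr rfl fun k _ => by ring
    rw [Finset.sum_congr rfl fun j _ => e1 j, ← Finset.sum_mul, ← Finset.mul_sum,
      halfsumA hW hA hB hhomA hhomB h₁ h₂]
    ring
  rw [h1, h2]
  ring

lemma Hrr_eq :
    ∑ β, ∑ γ, angular W (Sum.inr β) (Sum.inr γ) w * w (Sum.inr β) * w (Sum.inr γ)
      = c₂ * B (w ∘ Sum.inr)
        - (W w)⁻¹ * (c₂ * B (w ∘ Sum.inr)) * (c₂ * B (w ∘ Sum.inr)) := by
  have hpt : ∀ β γ : Fin n₂,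
      angular W (Sum.inr β) (Sum.inr γ) w * w (Sum.inr β) * w (Sum.inr γ)
        = c₂ * (fundG B β γ (w ∘ Sum.inr) * (w ∘ Sum.inr) β * (w ∘ Sum.inr) γ)
          - (W w)⁻¹ * c₂ * c₂ * (((1/2) * pd β B (w ∘ Sum.inr) * (w ∘ Sum.inr) β)
            * ((1/2) * pd γ B (w ∘ Sum.inr) * (w ∘ Sum.inr) γ)) := by
    intro β γ
    unfold angular
    rw [fundG_W_rr hW hA hB β γ h₁ h₂, ysumr hW hA hB hhomA hhomB h₁ h₂ β,
      ysumr hW hA hB hhomA hhomB h₁ h₂ γ]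
    simp only [Function.comp_apply]
    ring
  rw [Finset.sum_congr rfl fun β _ => Finset.sum_congr rfl fun γ _ => hpt β γ]
  rw [Finset.sum_congr rfl fun β (_ : β ∈ Finset.univ) => Finset.sum_sub_distrib _ _,
    Finset.sum_sub_distrib]
  have h1 : ∑ β, ∑ γ, c₂ * (fundG B β γ (w ∘ Sum.inr) * (w ∘ Sum.inr) β * (w ∘ Sum.inr) γ)
      = c₂ * B (w ∘ Sum.inr) := by
    simp_rw [← Finset.mul_sum]
    rw [sumC2 hB hhomB h₂]
  have h2 : ∑ β, ∑ γ, (W w)⁻¹ * c₂ * c₂ * (((1/2) * pd β B (w ∘ Sum.inr) * (w ∘ Sum.inr) β)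
        * ((1/2) * pd γ B (w ∘ Sum.inr) * (w ∘ Sum.inr) γ))
      = (W w)⁻¹ * c₂ * c₂ * (B (w ∘ Sum.inr) * B (w ∘ Sum.inr)) := by
    have e1 : ∀ β : Fin n₂, ∑ γ, (W w)⁻¹ * c₂ * c₂ * (((1/2) * pd β B (w ∘ Sum.inr) * (w ∘ Sum.inr) β)
          * ((1/2) * pd γ B (w ∘ Sum.inr) * (w ∘ Sum.inr) γ))
        = ((W w)⁻¹ * c₂ * c₂ * ((1/2) * pd β B (w ∘ Sum.inr) * (w ∘ Sum.inr) β))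
          * ∑ γ, (1/2) * pd γ B (w ∘ Sum.inr) * (w ∘ Sum.inr) γ := fun β => by
      rw [Finset.mul_sum]
      exact Finset.sum_congr rfl fun γ _ => by ring
    rw [Finset.sum_congr rfl fun β _ => e1 β, ← Finset.sum_mul, ← Finset.mul_sum,
      halfsumB hW hA hB hhomA hhomB h₁ h₂]
    ring
  rw [h1, h2]
  ring

end assemble2

section keys
variable {n₁ n₂ : ℕ} {A : (Fin n₁ → ℝ) → ℝ} {B : (Fin n₂ → ℝ) → ℝ} {c₁ c₂ : ℝ}
  {W : ((Fin n₁ ⊕ Fin n₂) → ℝ) → ℝ}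
  (hW : ∀ w, W w = c₁ * A (w ∘ Sum.inl) + c₂ * B (w ∘ Sum.inr))
  (hA : ContDiffOn ℝ (⊤ : ℕ∞) A {y | y ≠ 0}) (hB : ContDiffOn ℝ (⊤ : ℕ∞) B {y | y ≠ 0})
  (hhomA : ∀ c : ℝ, 0 < c → ∀ y, A (c • y) = c ^ 2 * A y)
  (hhomB : ∀ c : ℝ, 0 < c → ∀ y, B (c • y) = c ^ 2 * B y)
  (hpdA : ∀ (y : Fin n₁ → ℝ), y ≠ 0 → ∀ z : Fin n₁ → ℝ, z ≠ 0 →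
    0 < ∑ i, ∑ j, fundG A i j y * z i * z j)
  (hpdB : ∀ (v : Fin n₂ → ℝ), v ≠ 0 → ∀ z : Fin n₂ → ℝ, z ≠ 0 →
    0 < ∑ α, ∑ β, fundG B α β v * z α * z β)
  (hc₁ : 0 < c₁) (hc₂ : 0 < c₂)
  {w : (Fin n₁ ⊕ Fin n₂) → ℝ}
  (h₁ : w ∘ Sum.inl ≠ 0) (h₂ : w ∘ Sum.inr ≠ 0)
  {n : ℕ} (hM : ∀ a b c, matsumoto n W a b c w = 0)

include hW hA hB hhomA hhomB hpdA hpdB hc₁ hc₂ h₁ h₂ hM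

lemma keyr (α : Fin n₂) : meanI W (Sum.inr α) w = 0 := by
  have hrpos : (0:ℝ) < 1 / ((n:ℝ) + 1) := by positivity
  have hP₁ : 0 < A (w ∘ Sum.inl) := by
    rw [← sumC2 hA hhomA h₁]; exact hpdA _ h₁ _ h₁
  have hP₂ : 0 < B (w ∘ Sum.inr) := by
    rw [← sumC2 hB hhomB h₂]; exact hpdB _ h₂ _ h₂
  have hS : W w = c₁ * A (w ∘ Sum.inl) + c₂ * B (w ∘ Sum.inr) := hW w
  have hSpos : 0 < W w := by rw [hS]; positivity
  have hHll : (∑ j, ∑ k, angular W (Sum.inl j) (Sum.inl k) w * w (Sum.inl j) * w (Sum.inl k))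
      = c₁ * A (w ∘ Sum.inl) * (c₂ * B (w ∘ Sum.inr)) / W w := by
    rw [Hll_eq hW hA hB hhomA hhomB h₁ h₂, hS]
    field_simp
    ring
  have hHpos : 0 < ∑ j, ∑ k,
      angular W (Sum.inl j) (Sum.inl k) w * w (Sum.inl j) * w (Sum.inl k) := by
    rw [hHll]; positivity
  have hpt : ∀ j k : Fin n₁,
      ((1 / ((n:ℝ) + 1)) * meanI W (Sum.inr α) w)
        * (angular W (Sum.inl j) (Sum.inl k) w * w (Sum.inl j) * w (Sum.inl k))
      = (-(1 / ((n:ℝ) + 1))) * ((meanI W (Sum.inl j) w * w (Sum.inl j))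
          * (angular W (Sum.inr α) (Sum.inl k) w * w (Sum.inl k)))
        + (-(1 / ((n:ℝ) + 1))) * ((angular W (Sum.inr α) (Sum.inl j) w * w (Sum.inl j))
          * (meanI W (Sum.inl k) w * w (Sum.inl k))) := by
    intro j k
    have hm := hM (Sum.inr α) (Sum.inl j) (Sum.inl k)
    unfold matsumoto at hm
    rw [cart_W_rl hW hA hB α j (Sum.inl k) h₁ h₂] at hm
    have h3 : meanI W (Sum.inr α) w * angular W (Sum.inl j) (Sum.inl k) w
        + meanI W (Sum.inl j) w * angular W (Sum.inr α) (Sum.inl k) w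
        + meanI W (Sum.inl k) w * angular W (Sum.inr α) (Sum.inl j) w = 0 := by
      have h4 : (1 / ((n:ℝ) + 1)) * (meanI W (Sum.inr α) w * angular W (Sum.inl j) (Sum.inl k) w
          + meanI W (Sum.inl j) w * angular W (Sum.inr α) (Sum.inl k) w
          + meanI W (Sum.inl k) w * angular W (Sum.inr α) (Sum.inl j) w) = 0 := by
        linarith [hm]
      exact (mul_eq_zero.mp h4).resolve_left (ne_of_gt hrpos)
    linear_combination ((1 / ((n:ℝ) + 1)) * w (Sum.inl j) * w (Sum.inl k)) * h3
  have hsum := Finset.sum_congr rfl fun (j : Fin n₁) (_ : j ∈ Finset.univ) =>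
    Finset.sum_congr rfl fun (k : Fin n₁) (_ : k ∈ Finset.univ) => hpt j k
  rw [Finset.sum_congr rfl fun (j : Fin n₁) (_ : j ∈ Finset.univ) => Finset.sum_add_distrib,
    Finset.sum_add_distrib] at hsum
  -- LHS
  have hL : ∑ j : Fin n₁, ∑ k : Fin n₁,
      ((1 / ((n:ℝ) + 1)) * meanI W (Sum.inr α) w)
        * (angular W (Sum.inl j) (Sum.inl k) w * w (Sum.inl j) * w (Sum.inl k))
      = ((1 / ((n:ℝ) + 1)) * meanI W (Sum.inr α) w)
        * ∑ j, ∑ k, angular W (Sum.inl j) (Sum.inl k) w * w (Sum.inl j) * w (Sum.inl k) := by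
    rw [Finset.mul_sum]
    exact Finset.sum_congr rfl fun j _ => by rw [Finset.mul_sum]
  -- first RHS piece
  have hR1 : ∑ j : Fin n₁, ∑ k : Fin n₁,
      (-(1 / ((n:ℝ) + 1))) * ((meanI W (Sum.inl j) w * w (Sum.inl j))
        * (angular W (Sum.inr α) (Sum.inl k) w * w (Sum.inl k))) = 0 := by
    have e1 : ∀ j : Fin n₁, ∑ k : Fin n₁, (-(1 / ((n:ℝ) + 1))) * ((meanI W (Sum.inl j) w * w (Sum.inl j))
          * (angular W (Sum.inr α) (Sum.inl k) w * w (Sum.inl k)))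
        = ((-(1 / ((n:ℝ) + 1))) * (∑ k, angular W (Sum.inr α) (Sum.inl k) w * w (Sum.inl k)))
          * (meanI W (Sum.inl j) w * w (Sum.inl j)) := fun j => by
      rw [Finset.mul_sum, Finset.sum_mul]
      exact Finset.sum_congr rfl fun k _ => by ring
    rw [Finset.sum_congr rfl fun j _ => e1 j, ← Finset.mul_sum,
      Icontr_l hW hA hB hhomA hhomB h₁ h₂, mul_zero]
  have hR2 : ∑ j : Fin n₁, ∑ k : Fin n₁,
      (-(1 / ((n:ℝ) + 1))) * ((angular W (Sum.inr α) (Sum.inl j) w * w (Sum.inl j))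
        * (meanI W (Sum.inl k) w * w (Sum.inl k))) = 0 := by
    have e1 : ∀ j : Fin n₁, ∑ k : Fin n₁, (-(1 / ((n:ℝ) + 1))) * ((angular W (Sum.inr α) (Sum.inl j) w * w (Sum.inl j))
          * (meanI W (Sum.inl k) w * w (Sum.inl k)))
        = ((-(1 / ((n:ℝ) + 1))) * (angular W (Sum.inr α) (Sum.inl j) w * w (Sum.inl j)))
          * ∑ k, meanI W (Sum.inl k) w * w (Sum.inl k) := fun j => by
      rw [Finset.mul_sum]
      exact Finset.sum_congr rfl fun k _ => by ring
    rw [Finset.sum_congr rfl fun j _ => e1 j]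
    rw [Icontr_l hW hA hB hhomA hhomB h₁ h₂]
    simp
  rw [hL, hR1, hR2, add_zero] at hsum
  -- hsum : r * Iα * Hll = 0
  have hIα := hsum
  rcases mul_eq_zero.mp hIα with h | h
  · rcases mul_eq_zero.mp h with h' | h'
    · exact absurd h' (ne_of_gt hrpos)
    · exact h'
  · exact absurd h (ne_of_gt hHpos)

lemma keyl (i : Fin n₁) : meanI W (Sum.inl i) w = 0 := by
  have hrpos : (0:ℝ) < 1 / ((n:ℝ) + 1) := by positivity
  have hP₁ : 0 < A (w ∘ Sum.inl) := by
    rw [← sumC2 hA hhomA h₁]; exact hpdA _ h₁ _ h₁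
  have hP₂ : 0 < B (w ∘ Sum.inr) := by
    rw [← sumC2 hB hhomB h₂]; exact hpdB _ h₂ _ h₂
  have hS : W w = c₁ * A (w ∘ Sum.inl) + c₂ * B (w ∘ Sum.inr) := hW w
  have hSpos : 0 < W w := by rw [hS]; positivity
  have hHrr : (∑ β, ∑ γ, angular W (Sum.inr β) (Sum.inr γ) w * w (Sum.inr β) * w (Sum.inr γ))
      = c₂ * B (w ∘ Sum.inr) * (c₁ * A (w ∘ Sum.inl)) / W w := by
    rw [Hrr_eq hW hA hB hhomA hhomB h₁ h₂, hS]
    field_simp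
    ring
  have hHpos : 0 < ∑ β, ∑ γ,
      angular W (Sum.inr β) (Sum.inr γ) w * w (Sum.inr β) * w (Sum.inr γ) := by
    rw [hHrr]; positivity
  have hpt : ∀ β γ : Fin n₂,
      ((1 / ((n:ℝ) + 1)) * meanI W (Sum.inl i) w)
        * (angular W (Sum.inr β) (Sum.inr γ) w * w (Sum.inr β) * w (Sum.inr γ))
      = (-(1 / ((n:ℝ) + 1))) * ((meanI W (Sum.inr β) w * w (Sum.inr β))
          * (angular W (Sum.inl i) (Sum.inr γ) w * w (Sum.inr γ)))
        + (-(1 / ((n:ℝ) + 1))) * ((angular W (Sum.inl i) (Sum.inr β) w * w (Sum.inr β))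
          * (meanI W (Sum.inr γ) w * w (Sum.inr γ))) := by
    intro β γ
    have hm := hM (Sum.inl i) (Sum.inr β) (Sum.inr γ)
    unfold matsumoto at hm
    rw [cart_W_lr hW hA hB i β (Sum.inr γ) h₁ h₂] at hm
    have h3 : meanI W (Sum.inl i) w * angular W (Sum.inr β) (Sum.inr γ) w
        + meanI W (Sum.inr β) w * angular W (Sum.inl i) (Sum.inr γ) w
        + meanI W (Sum.inr γ) w * angular W (Sum.inl i) (Sum.inr β) w = 0 := by
      have h4 : (1 / ((n:ℝ) + 1)) * (meanI W (Sum.inl i) w * angular W (Sum.inr β) (Sum.inr γ) w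
          + meanI W (Sum.inr β) w * angular W (Sum.inl i) (Sum.inr γ) w
          + meanI W (Sum.inr γ) w * angular W (Sum.inl i) (Sum.inr β) w) = 0 := by
        linarith [hm]
      exact (mul_eq_zero.mp h4).resolve_left (ne_of_gt hrpos)
    linear_combination ((1 / ((n:ℝ) + 1)) * w (Sum.inr β) * w (Sum.inr γ)) * h3
  have hsum := Finset.sum_congr rfl fun (β : Fin n₂) (_ : β ∈ Finset.univ) =>
    Finset.sum_congr rfl fun (γ : Fin n₂) (_ : γ ∈ Finset.univ) => hpt β γ
  rw [Finset.sum_congr rfl fun (β : Fin n₂) (_ : β ∈ Finset.univ) => Finset.sum_add_distrib,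
    Finset.sum_add_distrib] at hsum
  have hL : ∑ β : Fin n₂, ∑ γ : Fin n₂,
      ((1 / ((n:ℝ) + 1)) * meanI W (Sum.inl i) w)
        * (angular W (Sum.inr β) (Sum.inr γ) w * w (Sum.inr β) * w (Sum.inr γ))
      = ((1 / ((n:ℝ) + 1)) * meanI W (Sum.inl i) w)
        * ∑ β, ∑ γ, angular W (Sum.inr β) (Sum.inr γ) w * w (Sum.inr β) * w (Sum.inr γ) := by
    rw [Finset.mul_sum]
    exact Finset.sum_congr rfl fun β _ => by rw [Finset.mul_sum]
  have hR1 : ∑ β : Fin n₂, ∑ γ : Fin n₂,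
      (-(1 / ((n:ℝ) + 1))) * ((meanI W (Sum.inr β) w * w (Sum.inr β))
        * (angular W (Sum.inl i) (Sum.inr γ) w * w (Sum.inr γ))) = 0 := by
    have e1 : ∀ β : Fin n₂, ∑ γ : Fin n₂, (-(1 / ((n:ℝ) + 1))) * ((meanI W (Sum.inr β) w * w (Sum.inr β))
          * (angular W (Sum.inl i) (Sum.inr γ) w * w (Sum.inr γ)))
        = ((-(1 / ((n:ℝ) + 1))) * (∑ γ, angular W (Sum.inl i) (Sum.inr γ) w * w (Sum.inr γ)))
          * (meanI W (Sum.inr β) w * w (Sum.inr β)) := fun β => by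
      rw [Finset.mul_sum, Finset.sum_mul]
      exact Finset.sum_congr rfl fun γ _ => by ring
    rw [Finset.sum_congr rfl fun β _ => e1 β, ← Finset.mul_sum,
      Icontr_r hW hA hB hhomA hhomB h₁ h₂, mul_zero]
  have hR2 : ∑ β : Fin n₂, ∑ γ : Fin n₂,
      (-(1 / ((n:ℝ) + 1))) * ((angular W (Sum.inl i) (Sum.inr β) w * w (Sum.inr β))
        * (meanI W (Sum.inr γ) w * w (Sum.inr γ))) = 0 := by
    have e1 : ∀ β : Fin n₂, ∑ γ : Fin n₂, (-(1 / ((n:ℝ) + 1))) * ((angular W (Sum.inl i) (Sum.inr β) w * w (Sum.inr β))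
          * (meanI W (Sum.inr γ) w * w (Sum.inr γ)))
        = ((-(1 / ((n:ℝ) + 1))) * (angular W (Sum.inl i) (Sum.inr β) w * w (Sum.inr β)))
          * ∑ γ, meanI W (Sum.inr γ) w * w (Sum.inr γ) := fun β => by
      rw [Finset.mul_sum]
      exact Finset.sum_congr rfl fun γ _ => by ring
    rw [Finset.sum_congr rfl fun β _ => e1 β]
    rw [Icontr_r hW hA hB hhomA hhomB h₁ h₂]
    simp
  rw [hL, hR1, hR2, add_zero] at hsum
  rcases mul_eq_zero.mp hsum with h | h
  · rcases mul_eq_zero.mp h with h' | h'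
    · exact absurd h' (ne_of_gt hrpos)
    · exact h'
  · exact absurd h (ne_of_gt hHpos)

end keys


/-- A C-reducible doubly warped product Finsler manifold has
vanishing mean Cartan torsion in both factor directions, hence is Riemannian. -/
theorem stmt13 {n₁ n₂ : ℕ} (hn₁ : 0 < n₁) (hn₂ : 0 < n₂)
    (F₁sq : (Fin n₁ → ℝ) → (Fin n₁ → ℝ) → ℝ)
    (F₂sq : (Fin n₂ → ℝ) → (Fin n₂ → ℝ) → ℝ)
    (f₁ : (Fin n₁ → ℝ) → ℝ) (f₂ : (Fin n₂ → ℝ) → ℝ)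
    (hf₁ : ∀ x, 0 < f₁ x) (hf₂ : ∀ u, 0 < f₂ u)
    (h₁sm : ∀ x, ContDiffOn ℝ (⊤ : ℕ∞) (F₁sq x) {y : Fin n₁ → ℝ | y ≠ 0})
    (h₂sm : ∀ u, ContDiffOn ℝ (⊤ : ℕ∞) (F₂sq u) {v : Fin n₂ → ℝ | v ≠ 0})
    (hhom₁ : ∀ c : ℝ, 0 < c → ∀ x y, F₁sq x (c • y) = c ^ 2 * F₁sq x y)
    (hhom₂ : ∀ c : ℝ, 0 < c → ∀ u v, F₂sq u (c • v) = c ^ 2 * F₂sq u v)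
    (hpd₁ : ∀ x (y : Fin n₁ → ℝ), y ≠ 0 → ∀ z : Fin n₁ → ℝ, z ≠ 0 →
      0 < ∑ i, ∑ j, fundG (F₁sq x) i j y * z i * z j)
    (hpd₂ : ∀ u (v : Fin n₂ → ℝ), v ≠ 0 → ∀ z : Fin n₂ → ℝ, z ≠ 0 →
      0 < ∑ α, ∑ β, fundG (F₂sq u) α β v * z α * z β)
    (WFsq : (Fin n₁ → ℝ) → (Fin n₂ → ℝ) → ((Fin n₁ ⊕ Fin n₂) → ℝ) → ℝ)
    (hWFsq : ∀ x u w, WFsq x u w =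
      (f₂ u) ^ 2 * F₁sq x (w ∘ Sum.inl) + (f₁ x) ^ 2 * F₂sq u (w ∘ Sum.inr))
    -- C-reducibility: the Matsumoto tensor of the doubly warped metric vanishes
    (hM : ∀ (x : Fin n₁ → ℝ) (u : Fin n₂ → ℝ) (w : (Fin n₁ ⊕ Fin n₂) → ℝ),
      w ∘ Sum.inl ≠ 0 → w ∘ Sum.inr ≠ 0 →
      ∀ a b c, matsumoto (n₁ + n₂) (WFsq x u) a b c w = 0) :
    (∀ (x : Fin n₁ → ℝ) (u : Fin n₂ → ℝ) (w : (Fin n₁ ⊕ Fin n₂) → ℝ),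
      w ∘ Sum.inl ≠ 0 → w ∘ Sum.inr ≠ 0 →
      ∀ α : Fin n₂, meanI (WFsq x u) (Sum.inr α) w = 0) ∧
    (∀ (x : Fin n₁ → ℝ) (u : Fin n₂ → ℝ) (w : (Fin n₁ ⊕ Fin n₂) → ℝ),
      w ∘ Sum.inl ≠ 0 → w ∘ Sum.inr ≠ 0 →
      ∀ i : Fin n₁, meanI (WFsq x u) (Sum.inl i) w = 0) ∧
    (∀ (x : Fin n₁ → ℝ) (u : Fin n₂ → ℝ) (w : (Fin n₁ ⊕ Fin n₂) → ℝ),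
      w ∘ Sum.inl ≠ 0 → w ∘ Sum.inr ≠ 0 →
      ∀ a b c, cart (WFsq x u) a b c w = 0) := by
  have key1 : ∀ (x : Fin n₁ → ℝ) (u : Fin n₂ → ℝ) (w : (Fin n₁ ⊕ Fin n₂) → ℝ),
      w ∘ Sum.inl ≠ 0 → w ∘ Sum.inr ≠ 0 →
      ∀ α : Fin n₂, meanI (WFsq x u) (Sum.inr α) w = 0 := by
    intro x u w h₁ h₂ α
    exact keyr (hWFsq x u) (h₁sm x) (h₂sm u) (fun c hc y => hhom₁ c hc x y)
      (fun c hc v => hhom₂ c hc u v) (hpd₁ x) (hpd₂ u)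
      (pow_pos (hf₂ u) 2) (pow_pos (hf₁ x) 2) h₁ h₂ (hM x u w h₁ h₂) α
  have key2 : ∀ (x : Fin n₁ → ℝ) (u : Fin n₂ → ℝ) (w : (Fin n₁ ⊕ Fin n₂) → ℝ),
      w ∘ Sum.inl ≠ 0 → w ∘ Sum.inr ≠ 0 →
      ∀ i : Fin n₁, meanI (WFsq x u) (Sum.inl i) w = 0 := by
    intro x u w h₁ h₂ i
    exact keyl (hWFsq x u) (h₁sm x) (h₂sm u) (fun c hc y => hhom₁ c hc x y)
      (fun c hc v => hhom₂ c hc u v) (hpd₁ x) (hpd₂ u)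
      (pow_pos (hf₂ u) 2) (pow_pos (hf₁ x) 2) h₁ h₂ (hM x u w h₁ h₂) i
  refine ⟨key1, key2, ?_⟩
  intro x u w h₁ h₂ a b c
  have hma := hM x u w h₁ h₂ a b c
  unfold matsumoto at hma
  have hz : ∀ d : Fin n₁ ⊕ Fin n₂, meanI (WFsq x u) d w = 0 := by
    rintro (i | α)
    · exact key2 x u w h₁ h₂ i
    · exact key1 x u w h₁ h₂ α
  rw [hz a, hz b, hz c] at hma
  simpa using hma
end
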